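/- arXiv:1604.02881 — 10 statements merged into one kernel-verified Lean document; each statement's English description precedes it below -/
import Mathlib

section
/- Let (Y_α, ν_α), α ∈ J, be an indexed family of GTS's, let X := ∏_{α∈J} Y_α with projections π_α, and let μ := {⋃_{α∈J} π_α⁻¹(M_α) | M_α ∈ ν_α for all α ∈ J} be the product GT. Then: (i) μ is a generalized topology on X; (ii) each π_α is (μ, ν_α)-continuous; (iii) for every GTS (Z, ρ) and every map h : Z → X, h is (ρ, μ)-continuous if and only if π_α ∘ h is (ρ, ν_α)-continuous for every α ∈ J; (iv) for every M ⊆ X, c_μ(M) = {x ∈ X | x_α ∈ c_{ν_α}(π_α(M)) for all α ∈ J}, i.e., the μ-closure of M is the product of the ν_α-closures of its projections. -/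
universe v w z

/-- A generalized topology on `X`: contains `∅` and is closed under arbitrary unions. -/
def IsGT {X : Type*} (μ : Set (Set X)) : Prop :=
  ∅ ∈ μ ∧ ∀ S : Set (Set X), S ⊆ μ → ⋃₀ S ∈ μ

/-- `f` is `(μ, ν)`-continuous: preimages of `ν`-open sets are `μ`-open. -/
def GCont {X Y : Type*} (μ : Set (Set X)) (ν : Set (Set Y)) (f : X → Y) : Prop :=
  ∀ N ∈ ν, f ⁻¹' N ∈ μ

/-- `c_μ A`: the intersection of all `μ`-closed sets containing `A`. -/
def gClosure {X : Type*} (μ : Set (Set X)) (A : Set X) : Set X :=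
  ⋂₀ {F : Set X | Fᶜ ∈ μ ∧ A ⊆ F}

lemma gsubset {X : Type*} (μ : Set (Set X)) (A : Set X) : A ⊆ gClosure μ A :=
  fun _ hx => Set.mem_sInter.2 fun _ hF => hF.2 hx

lemma gmin {X : Type*} {μ : Set (Set X)} {A F : Set X} (h1 : Fᶜ ∈ μ) (h2 : A ⊆ F) :
    gClosure μ A ⊆ F := Set.sInter_subset_of_mem ⟨h1, h2⟩

lemma isGT_iUnion {X : Type*} {ι : Sort*} {μ : Set (Set X)} (h : IsGT μ)
    (f : ι → Set X) (hf : ∀ i, f i ∈ μ) : ⋃ i, f i ∈ μ := by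
  rw [← Set.sUnion_range]
  exact h.2 _ (by rintro _ ⟨i, rfl⟩; exact hf i)

lemma gcompl {X : Type*} {μ : Set (Set X)} (hμ : IsGT μ) (A : Set X) :
    (gClosure μ A)ᶜ ∈ μ := by
  rw [gClosure, Set.compl_sInter, Set.sUnion_image]
  exact isGT_iUnion hμ _ fun F => isGT_iUnion hμ _ fun hF => hF.1

theorem stmt6 {J : Type v} {Y : J → Type w}
    (ν : ∀ α, Set (Set (Y α))) (hν : ∀ α, IsGT (ν α))
    (μ : Set (Set (∀ α, Y α)))
    (hμ : μ = {U : Set (∀ α, Y α) | ∃ M : ∀ α, Set (Y α),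
      (∀ α, M α ∈ ν α) ∧ U = ⋃ α, (fun x => x α) ⁻¹' M α}) :
    IsGT μ ∧ (∀ α, GCont μ (ν α) (fun x => x α)) ∧
      (∀ (Z : Type z) (ρ : Set (Set Z)), IsGT ρ → ∀ h : Z → ∀ α, Y α,
        (GCont ρ μ h ↔ ∀ α, GCont ρ (ν α) (fun zz => h zz α))) ∧
      ∀ M : Set (∀ α, Y α),
        gClosure μ M = {x | ∀ α, x α ∈ gClosure (ν α) ((fun y => y α) '' M)} := by
  classical
  subst hμ
  have hproj : ∀ α, GCont {U : Set (∀ α, Y α) | ∃ M : ∀ α, Set (Y α),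
      (∀ α, M α ∈ ν α) ∧ U = ⋃ α, (fun x => x α) ⁻¹' M α} (ν α) (fun x => x α) := by
    intro α N hN
    refine ⟨Function.update (fun β => ∅) α N, fun β => ?_, ?_⟩
    · rcases eq_or_ne β α with rfl | h
      · simpa using hN
      · rw [Function.update_of_ne h]; exact (hν β).1
    · ext x
      simp only [Set.mem_preimage, Set.mem_iUnion]
      constructor
      · intro hx; exact ⟨α, by simpa using hx⟩
      · rintro ⟨β, hβ⟩
        rcases eq_or_ne β α with rfl | h
        · simpa using hβ
        · rw [Function.update_of_ne h] at hβ; exact absurd hβ (Set.notMem_empty _)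
  refine ⟨⟨⟨fun _ => ∅, fun α => (hν α).1, by simp⟩, ?_⟩, hproj, ?_, ?_⟩
  · -- closed under unions
    intro S hS
    choose M hM1 hM2 using hS
    refine ⟨fun α => ⋃ U : S, M U.2 α,
      fun α => isGT_iUnion (hν α) _ fun U => hM1 U.2 α, ?_⟩
    ext x
    simp only [Set.mem_sUnion, Set.mem_iUnion, Set.mem_preimage]
    constructor
    · rintro ⟨U, hU, hx⟩
      rw [hM2 hU] at hx
      obtain ⟨α, hα⟩ := Set.mem_iUnion.1 hx
      exact ⟨α, ⟨U, hU⟩, hα⟩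
    · rintro ⟨α, ⟨U, hU⟩, hx⟩
      exact ⟨U, hU, by rw [hM2 hU]; exact Set.mem_iUnion.2 ⟨α, hx⟩⟩
  · -- universal property
    intro Z ρ hρ h
    constructor
    · intro hc α N hN
      exact hc _ (hproj α N hN)
    · rintro hc U ⟨M, hM, rfl⟩
      rw [Set.preimage_iUnion]
      exact isGT_iUnion hρ _ fun α => hc α (M α) (hM α)
  · -- closure
    intro M
    apply subset_antisymm
    · apply gmin
      · refine ⟨fun α => (gClosure (ν α) ((fun y => y α) '' M))ᶜ,
          fun α => gcompl (hν α) _, ?_⟩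
        ext x
        simp only [Set.mem_compl_iff, Set.mem_setOf_eq, not_forall, Set.mem_iUnion,
          Set.mem_preimage]
      · intro x hx α
        exact gsubset _ _ ⟨x, hx, rfl⟩
    · intro x hx
      refine Set.mem_sInter.2 fun F hF => ?_
      obtain ⟨⟨Mf, hMf, hFc⟩, hMF⟩ := hF
      by_contra hxF
      have hxc : x ∈ Fᶜ := hxF
      rw [hFc] at hxc
      obtain ⟨α, hα⟩ := Set.mem_iUnion.1 hxc
      have hsub : (fun y => y α) '' M ⊆ (Mf α)ᶜ := by
        rintro _ ⟨m, hm, rfl⟩ hmem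
        have : m ∈ Fᶜ := hFc ▸ Set.mem_iUnion.2 ⟨α, hmem⟩
        exact this (hMF hm)
      exact gmin (by simpa using hMf α) hsub (hx α) hα
end

section
/- Let (Y_α, ν_α), α ∈ J, be an indexed family of GTS's, let X := ⨿_{α∈J} Y_α be their disjoint union with injections ι_α : Y_α → X, and define μ := {⋃_{α∈J} ι_α(N_α) | N_α ∈ ν_α for all α ∈ J}. Then: (i) μ is a generalized topology on X; (ii) each ι_α is (ν_α, μ)-continuous; (iii) for every GTS (Z, ρ) and every map h : X → Z, h is (μ, ρ)-continuous if and only if h ∘ ι_α is (ν_α, ρ)-continuous for every α ∈ J; (iv) for every A ⊆ X, c_μ(A) = ⋃_{α∈J} ι_α(c_{ν_α}(ι_α⁻¹(A))). -/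
universe v w z

theorem stmt7 {J : Type v} {Y : J → Type w}
    (ν : ∀ α, Set (Set (Y α))) (hν : ∀ α, IsGT (ν α))
    (μ : Set (Set (Σ α, Y α)))
    (hμ : μ = {U : Set (Σ α, Y α) | ∃ N : ∀ α, Set (Y α),
      (∀ α, N α ∈ ν α) ∧ U = ⋃ α, Sigma.mk α '' N α}) :
    IsGT μ ∧ (∀ α, GCont (ν α) μ (Sigma.mk α)) ∧
      (∀ (Z : Type z) (ρ : Set (Set Z)), IsGT ρ → ∀ h : (Σ α, Y α) → Z,
        (GCont μ ρ h ↔ ∀ α, GCont (ν α) ρ (fun y => h ⟨α, y⟩))) ∧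
      ∀ A : Set (Σ α, Y α),
        gClosure μ A = ⋃ α, Sigma.mk α '' gClosure (ν α) (Sigma.mk α ⁻¹' A) := by
  -- every set is the union of the images of its fiberwise preimages
  have hdecomp : ∀ U : Set (Σ α, Y α), U = ⋃ α, Sigma.mk α '' (Sigma.mk α ⁻¹' U) := by
    intro U
    ext ⟨α, y⟩
    simp only [Set.mem_iUnion, Set.mem_image]
    constructor
    · intro h; exact ⟨α, y, h, rfl⟩
    · rintro ⟨i, x, hx, h⟩
      obtain ⟨rfl, h⟩ := Sigma.mk.inj_iff.1 h
      cases eq_of_heq h; exact hx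
  have hpre : ∀ (N : ∀ α, Set (Y α)) (α : J),
      Sigma.mk α ⁻¹' (⋃ β, Sigma.mk β '' N β) = N α := by
    intro N α
    ext y
    simp only [Set.mem_preimage, Set.mem_iUnion, Set.mem_image]
    constructor
    · rintro ⟨β, z, hz, h⟩
      obtain ⟨rfl, h⟩ := Sigma.mk.inj_iff.1 h
      cases (eq_of_heq h); exact hz
    · intro hy; exact ⟨α, y, hy, rfl⟩
  -- key characterization of μ
  have hmem : ∀ U : Set (Σ α, Y α), U ∈ μ ↔ ∀ α, Sigma.mk α ⁻¹' U ∈ ν α := by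
    intro U
    rw [hμ]
    constructor
    · rintro ⟨N, hN, rfl⟩ α
      rw [hpre N α]; exact hN α
    · intro h
      exact ⟨fun α => Sigma.mk α ⁻¹' U, h, hdecomp U⟩
  have hGT : IsGT μ := by
    constructor
    · rw [hmem]; intro α; simpa using (hν α).1
    · intro S hS
      rw [hmem]
      intro α
      have : Sigma.mk α ⁻¹' ⋃₀ S = ⋃₀ ((fun U => Sigma.mk α ⁻¹' U) '' S) := by
        ext y; simp [Set.mem_sUnion]
      rw [this]
      apply (hν α).2
      rintro _ ⟨U, hU, rfl⟩
      exact (hmem U).1 (hS hU) α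
  refine ⟨hGT, ?_, ?_, ?_⟩
  · intro α N hN
    exact (hmem N).1 hN α
  · intro Z ρ hρ h
    constructor
    · intro hc α N hN
      have := hc N hN
      exact (hmem _).1 this α
    · intro hc N hN
      rw [hmem]
      intro α
      exact hc α N hN
  · intro A
    have hsub : ∀ α, Sigma.mk α '' gClosure (ν α) (Sigma.mk α ⁻¹' A) ⊆ gClosure μ A := by
      rintro α _ ⟨y, hy, rfl⟩ G ⟨hGc, hAG⟩
      have h1 : (Sigma.mk α ⁻¹' G)ᶜ ∈ ν α := by
        have := (hmem Gᶜ).1 hGc α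
        simpa using this
      have h2 : Sigma.mk α ⁻¹' A ⊆ Sigma.mk α ⁻¹' G := fun z hz => hAG hz
      exact hy (Sigma.mk α ⁻¹' G) ⟨h1, h2⟩
    apply le_antisymm
    · -- gClosure μ A ⊆ RHS: the RHS is μ-closed and contains A
      intro x hx
      apply hx
      constructor
      · rw [hmem]
        intro α
        have : Sigma.mk α ⁻¹' (⋃ β, Sigma.mk β '' gClosure (ν β) (Sigma.mk β ⁻¹' A))
            = gClosure (ν α) (Sigma.mk α ⁻¹' A) :=
          hpre (fun β => gClosure (ν β) (Sigma.mk β ⁻¹' A)) α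
        rw [Set.preimage_compl, this]
        have : (gClosure (ν α) (Sigma.mk α ⁻¹' A))ᶜ
            = ⋃₀ {V : Set (Y α) | V ∈ ν α ∧ Sigma.mk α ⁻¹' A ⊆ Vᶜ} := by
          ext y
          simp only [gClosure, Set.mem_compl_iff, Set.mem_sInter, not_forall,
            Set.mem_sUnion, Set.mem_setOf_eq]
          constructor
          · rintro ⟨F, ⟨hF, hAF⟩, hyF⟩
            exact ⟨Fᶜ, ⟨hF, fun z hz => by simpa using hAF hz⟩, hyF⟩
          · rintro ⟨V, ⟨hV, hAV⟩, hyV⟩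
            exact ⟨Vᶜ, ⟨by simpa using hV, fun z hz => hAV hz⟩, by simpa using hyV⟩
        rw [this]
        exact (hν α).2 _ (fun V hV => hV.1)
      · intro z hz
        rcases z with ⟨α, y⟩
        refine Set.mem_iUnion.2 ⟨α, y, ?_, rfl⟩
        intro F hF
        exact hF.2 hz
    · exact Set.iUnion_subset hsub
end

section
/- Let γ be the generalized topology on ℝ whose members are the arbitrary unions of sets of the form (-∞, s) and (t, ∞) with s, t ∈ ℝ. Then: (i) a subset A ⊆ ℝ is γ-closed if and only if A is convex and closed in the standard topology of ℝ; (ii) (ℝ, γ) is normal and T1 (hence T4). -/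
/-- The GTS `(X, μ)` is T1. -/
def GT1 {X : Type*} (μ : Set (Set X)) : Prop :=
  ∀ x y : X, x ≠ y → ∃ M ∈ μ, x ∈ M ∧ y ∉ M

/-- The GTS `(X, μ)` is normal. -/
def GNormal {X : Type*} (μ : Set (Set X)) : Prop :=
  ∀ F₁ F₂ : Set X, F₁ᶜ ∈ μ → F₂ᶜ ∈ μ → Disjoint F₁ F₂ →
    ∃ M₁ ∈ μ, ∃ M₂ ∈ μ, F₁ ⊆ M₁ ∧ F₂ ⊆ M₂ ∧ Disjoint M₁ M₂

/-- Császár's generalized topology on `ℝ`: arbitrary unions of sets of the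
form `(-∞, s)` and `(t, ∞)`. -/
def gammaR : Set (Set ℝ) :=
  {U | ∃ S : Set (Set ℝ),
    (∀ V ∈ S, (∃ s : ℝ, V = Set.Iio s) ∨ (∃ t : ℝ, V = Set.Ioi t)) ∧ U = ⋃₀ S}

open Set Topology

lemma Set.OrdConnected.forall_lt_of_disjoint {α : Type*} [LinearOrder α] {F G : Set α}
    (hF : F.OrdConnected) (hG : G.OrdConnected) (hFG : Disjoint F G) {a b : α}
    (ha : a ∈ F) (hb : b ∈ G) (hab : a < b) : ∀ x ∈ F, ∀ y ∈ G, x < y := by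
  intro x hx y hy
  by_contra! hyx
  rcases le_or_gt a y with hay | hya
  · exact hFG.notMem_of_mem_left (hF.out ha hx ⟨hay, hyx⟩) hy
  · exact hFG.notMem_of_mem_left ha (hG.out hy hb ⟨hya.le, hab.le⟩)

lemma exists_Iio_Ioi_separating {α : Type*} [ConditionallyCompleteLinearOrder α]
    [TopologicalSpace α] [OrderTopology α] [DenselyOrdered α] {F G : Set α}
    (hF : IsClosed F) (hG : IsClosed G) (hF₀ : F.Nonempty) (hG₀ : G.Nonempty)
    (hlt : ∀ x ∈ F, ∀ y ∈ G, x < y) : ∃ c, F ⊆ Iio c ∧ G ⊆ Ioi c := by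
  obtain ⟨a, ha⟩ := hF₀
  obtain ⟨b, hb⟩ := hG₀
  have hbddF : BddAbove F := ⟨b, fun x hx => (hlt x hx b hb).le⟩
  have hbddG : BddBelow G := ⟨a, fun y hy => (hlt a ha y hy).le⟩
  obtain ⟨c, hFc, hcG⟩ :=
    exists_between (hlt _ (hF.csSup_mem ⟨a, ha⟩ hbddF) _ (hG.csInf_mem ⟨b, hb⟩ hbddG))
  exact ⟨c, fun x hx => (le_csSup hbddF hx).trans_lt hFc,
    fun y hy => hcG.trans_le (csInf_le hbddG hy)⟩

lemma mem_gammaR_iff {U : Set ℝ} :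
    U ∈ gammaR ↔ ∀ x ∈ U, (∃ s, x < s ∧ Iio s ⊆ U) ∨ (∃ t, t < x ∧ Ioi t ⊆ U) := by
  constructor
  · rintro ⟨S, hS, rfl⟩ x ⟨V, hV, hxV⟩
    rcases hS V hV with ⟨s, rfl⟩ | ⟨t, rfl⟩
    · exact Or.inl ⟨s, hxV, subset_sUnion_of_mem hV⟩
    · exact Or.inr ⟨t, hxV, subset_sUnion_of_mem hV⟩
  · intro h
    refine ⟨{V | ((∃ s, V = Iio s) ∨ (∃ t, V = Ioi t)) ∧ V ⊆ U}, fun V hV => hV.1,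
      Subset.antisymm (fun x hx => ?_) (sUnion_subset fun V hV => hV.2)⟩
    rcases h x hx with ⟨s, hxs, hs⟩ | ⟨t, htx, ht⟩
    · exact ⟨Iio s, ⟨Or.inl ⟨s, rfl⟩, hs⟩, hxs⟩
    · exact ⟨Ioi t, ⟨Or.inr ⟨t, rfl⟩, ht⟩, htx⟩

lemma empty_mem_gammaR : (∅ : Set ℝ) ∈ gammaR :=
  mem_gammaR_iff.2 fun _ hx => hx.elim

lemma univ_mem_gammaR : (univ : Set ℝ) ∈ gammaR :=
  mem_gammaR_iff.2 fun x _ => Or.inl ⟨x + 1, by linarith, subset_univ _⟩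

lemma Iio_mem_gammaR (s : ℝ) : Iio s ∈ gammaR :=
  mem_gammaR_iff.2 fun _ hx => Or.inl ⟨s, hx, subset_rfl⟩

lemma Ioi_mem_gammaR (t : ℝ) : Ioi t ∈ gammaR :=
  mem_gammaR_iff.2 fun _ hx => Or.inr ⟨t, hx, subset_rfl⟩

lemma isOpen_of_mem_gammaR {U : Set ℝ} (hU : U ∈ gammaR) : IsOpen U := by
  refine isOpen_iff_mem_nhds.2 fun x hx => ?_
  rcases mem_gammaR_iff.1 hU x hx with ⟨s, hxs, hs⟩ | ⟨t, htx, ht⟩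
  · exact Filter.mem_of_superset (Iio_mem_nhds hxs) hs
  · exact Filter.mem_of_superset (Ioi_mem_nhds htx) ht

lemma ordConnected_compl_of_mem_gammaR {U : Set ℝ} (hU : U ∈ gammaR) : Uᶜ.OrdConnected := by
  refine ⟨fun a ha b hb x ⟨hax, hxb⟩ hxU => ?_⟩
  rcases mem_gammaR_iff.1 hU x hxU with ⟨s, hxs, hs⟩ | ⟨t, htx, ht⟩
  · exact ha (hs (hax.trans_lt hxs))
  · exact hb (ht (htx.trans_le hxb))

lemma compl_mem_gammaR_of_ordConnected {A : Set ℝ} (hA : A.OrdConnected) (hAc : IsClosed A) :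
    Aᶜ ∈ gammaR := by
  refine mem_gammaR_iff.2 fun x hx => ?_
  have hside : (∀ a ∈ A, x < a) ∨ (∀ a ∈ A, a < x) := by
    by_contra! ⟨⟨a, ha, hax⟩, ⟨b, hb, hxb⟩⟩
    exact hx (hA.out ha hb ⟨hax, hxb⟩)
  have hnhds : Aᶜ ∈ 𝓝 x := hAc.isOpen_compl.mem_nhds hx
  rcases hside with hbelow | habove
  · obtain ⟨u, hxu, hIco⟩ := exists_Ico_subset_of_mem_nhds hnhds ⟨x + 1, by linarith⟩
    exact Or.inl ⟨u, hxu, fun y hyu hyA => hIco ⟨(hbelow y hyA).le, hyu⟩ hyA⟩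
  · obtain ⟨l, hlx, hIoc⟩ := exists_Ioc_subset_of_mem_nhds hnhds ⟨x - 1, by linarith⟩
    exact Or.inr ⟨l, hlx, fun y hly hyA => hIoc ⟨hly, (habove y hyA).le⟩ hyA⟩

lemma compl_mem_gammaR_iff (A : Set ℝ) : Aᶜ ∈ gammaR ↔ A.OrdConnected ∧ IsClosed A :=
  ⟨fun h => ⟨compl_compl A ▸ ordConnected_compl_of_mem_gammaR h,
      isOpen_compl_iff.1 (isOpen_of_mem_gammaR h)⟩,
    fun h => compl_mem_gammaR_of_ordConnected h.1 h.2⟩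

lemma gNormal_gammaR : GNormal gammaR := by
  intro F₁ F₂ h₁ h₂ hdisj
  rw [compl_mem_gammaR_iff] at h₁ h₂
  rcases F₁.eq_empty_or_nonempty with rfl | ⟨a, ha⟩
  · exact ⟨∅, empty_mem_gammaR, univ, univ_mem_gammaR, subset_rfl, subset_univ _,
      empty_disjoint _⟩
  rcases F₂.eq_empty_or_nonempty with rfl | ⟨b, hb⟩
  · exact ⟨univ, univ_mem_gammaR, ∅, empty_mem_gammaR, subset_univ _, subset_rfl,
      disjoint_empty _⟩
  rcases lt_or_gt_of_ne (hdisj.ne_of_mem ha hb) with hab | hba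
  · obtain ⟨c, h₁c, h₂c⟩ := exists_Iio_Ioi_separating h₁.2 h₂.2 ⟨a, ha⟩ ⟨b, hb⟩
      (h₁.1.forall_lt_of_disjoint h₂.1 hdisj ha hb hab)
    exact ⟨Iio c, Iio_mem_gammaR c, Ioi c, Ioi_mem_gammaR c, h₁c, h₂c, Iio_disjoint_Ioi_same⟩
  · obtain ⟨c, h₂c, h₁c⟩ := exists_Iio_Ioi_separating h₂.2 h₁.2 ⟨b, hb⟩ ⟨a, ha⟩
      (h₂.1.forall_lt_of_disjoint h₁.1 hdisj.symm hb ha hba)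
    exact ⟨Ioi c, Ioi_mem_gammaR c, Iio c, Iio_mem_gammaR c, h₁c, h₂c,
      Iio_disjoint_Ioi_same.symm⟩

lemma gT1_gammaR : GT1 gammaR := by
  intro x y hxy
  rcases lt_or_gt_of_ne hxy with h | h
  · exact ⟨Iio y, Iio_mem_gammaR y, h, lt_irrefl y⟩
  · exact ⟨Ioi y, Ioi_mem_gammaR y, h, lt_irrefl y⟩

theorem stmt9 :
    (∀ A : Set ℝ, Aᶜ ∈ gammaR ↔ Convex ℝ A ∧ IsClosed A) ∧
    GNormal gammaR ∧ GT1 gammaR :=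
  ⟨fun A => by rw [compl_mem_gammaR_iff, convex_iff_ordConnected], gNormal_gammaR, gT1_gammaR⟩
end

section
/- Let X be a set, let (Y_α, ν_α), α ∈ J, be an indexed family of GTS's, let φ_α : X → Y_α be maps, and let μ := {⋃_{α∈J} φ_α⁻¹(M_α) | M_α ∈ ν_α for all α ∈ J} be the initial (weak) GT on X. If every (Y_α, ν_α) is regular, then (X, μ) is regular; if every (Y_α, ν_α) is completely regular, then (X, μ) is completely regular. -/
universe u v w

/-- Császár's generalized topology `γ₀` on `[0,1]`: arbitrary unions of sets of
the form `[0, x)` and `(y, 1]` with `x, y ∈ [0,1]`. -/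
def gamma0 : Set (Set unitInterval) :=
  {U | ∃ S : Set (Set unitInterval),
    (∀ V ∈ S, (∃ a : unitInterval, V = Set.Iio a) ∨ (∃ b : unitInterval, V = Set.Ioi b)) ∧
    U = ⋃₀ S}

/-- The GTS `(X, μ)` is regular. -/
def GRegular {X : Type*} (μ : Set (Set X)) : Prop :=
  ∀ (x : X) (F : Set X), Fᶜ ∈ μ → x ∉ F →
    ∃ U ∈ μ, ∃ V ∈ μ, x ∈ U ∧ F ⊆ V ∧ Disjoint U V

/-- The GTS `(X, μ)` is completely regular: points can be separated from closed
sets by continuous maps into `([0,1], γ₀)`. -/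
def GCompletelyRegular {X : Type*} (μ : Set (Set X)) : Prop :=
  ∀ (x : X) (F : Set X), Fᶜ ∈ μ → x ∉ F →
    ∃ f : X → unitInterval, GCont μ gamma0 f ∧ f x = 0 ∧ ∀ y ∈ F, f y = 1

theorem stmt10 {X : Type u} {J : Type v} {Y : J → Type w}
    (ν : ∀ α, Set (Set (Y α))) (hν : ∀ α, IsGT (ν α))
    (φ : ∀ α, X → Y α) (μ : Set (Set X))
    (hμ : μ = {U : Set X | ∃ M : ∀ α, Set (Y α),
      (∀ α, M α ∈ ν α) ∧ U = ⋃ α, φ α ⁻¹' M α}) :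
    ((∀ α, GRegular (ν α)) → GRegular μ) ∧
    ((∀ α, GCompletelyRegular (ν α)) → GCompletelyRegular μ) := by
  classical
  have key : ∀ (α₀ : J) (N : Set (Y α₀)), N ∈ ν α₀ → φ α₀ ⁻¹' N ∈ μ := by
    intro α₀ N hN
    rw [hμ]
    refine ⟨Function.update (fun α => (∅ : Set (Y α))) α₀ N, ?_, ?_⟩
    · intro α
      rcases eq_or_ne α α₀ with rfl | h
      · simpa using hN
      · simpa [Function.update_of_ne h] using (hν α).1
    · ext z
      simp only [Set.mem_iUnion, Set.mem_preimage]
      constructor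
      · intro hz
        exact ⟨α₀, by simpa using hz⟩
      · rintro ⟨α, hα⟩
        rcases eq_or_ne α α₀ with rfl | h
        · simpa using hα
        · simp [Function.update_of_ne h] at hα
  have setup : ∀ (F : Set X) (x : X), Fᶜ ∈ μ → x ∉ F →
      ∃ α₀ : J, ∃ N : Set (Y α₀), N ∈ ν α₀ ∧ φ α₀ x ∈ N ∧
        ∀ y ∈ F, φ α₀ y ∈ Nᶜ := by
    intro F x hF hxF
    rw [hμ] at hF
    obtain ⟨M, hM, hFc⟩ := hF
    have hx : x ∈ Fᶜ := hxF
    rw [hFc] at hx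
    obtain ⟨α₀, hxα⟩ := Set.mem_iUnion.1 hx
    refine ⟨α₀, M α₀, hM α₀, hxα, ?_⟩
    intro y hy hyM
    have : y ∈ Fᶜ := by
      rw [hFc]; exact Set.mem_iUnion.2 ⟨α₀, hyM⟩
    exact this hy
  constructor
  · intro hreg x F hF hxF
    obtain ⟨α₀, N, hN, hxN, hFN⟩ := setup F x hF hxF
    have hclosed : Nᶜᶜ ∈ ν α₀ := by simpa using hN
    obtain ⟨U, hU, V, hV, hxU, hFV, hUV⟩ :=
      hreg α₀ (φ α₀ x) Nᶜ hclosed (by simpa using hxN)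
    exact ⟨φ α₀ ⁻¹' U, key α₀ U hU, φ α₀ ⁻¹' V, key α₀ V hV, hxU,
      fun y hy => hFV (hFN y hy), hUV.preimage _⟩
  · intro hcr x F hF hxF
    obtain ⟨α₀, N, hN, hxN, hFN⟩ := setup F x hF hxF
    have hclosed : Nᶜᶜ ∈ ν α₀ := by simpa using hN
    obtain ⟨g, hg, hg0, hg1⟩ :=
      hcr α₀ (φ α₀ x) Nᶜ hclosed (by simpa using hxN)
    refine ⟨g ∘ φ α₀, ?_, hg0, fun y hy => hg1 _ (hFN y hy)⟩
    intro W hW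
    have : (g ∘ φ α₀) ⁻¹' W = φ α₀ ⁻¹' (g ⁻¹' W) := rfl
    rw [this]
    exact key α₀ _ (hg W hW)
end

section
/- Let X be a set, let (Y_α, ν_α), α ∈ J, be an indexed family of GTS's, let φ_α : X → Y_α be maps which are point-separating (for any distinct x₁, x₂ ∈ X there is α ∈ J with φ_α(x₁) ≠ φ_α(x₂)), and let μ := {⋃_{α∈J} φ_α⁻¹(M_α) | M_α ∈ ν_α for all α ∈ J} be the initial (weak) GT on X. If every (Y_α, ν_α) is T1, then (X, μ) is T1; if every (Y_α, ν_α) is T2, then (X, μ) is T2. -/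
universe u v w

/-- The GTS `(X, μ)` is T2. -/
def GT2 {X : Type*} (μ : Set (Set X)) : Prop :=
  ∀ x y : X, x ≠ y → ∃ U ∈ μ, ∃ V ∈ μ, x ∈ U ∧ y ∈ V ∧ Disjoint U V

lemma preimage_mem_aux {X : Type u} {J : Type v} {Y : J → Type w}
    (ν : ∀ α, Set (Set (Y α))) (hν : ∀ α, IsGT (ν α))
    (φ : ∀ α, X → Y α) (α : J) (M : Set (Y α)) (hM : M ∈ ν α) :
    ∃ N : ∀ γ, Set (Y γ), (∀ γ, N γ ∈ ν γ) ∧ φ α ⁻¹' M = ⋃ γ, φ γ ⁻¹' N γ := by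
  classical
  refine ⟨Function.update (fun γ => (∅ : Set (Y γ))) α M, ?_, ?_⟩
  · intro γ
    by_cases h : γ = α
    · subst h; simpa using hM
    · simpa [Function.update_of_ne h] using (hν γ).1
  · ext x
    simp only [Set.mem_preimage, Set.mem_iUnion]
    constructor
    · intro h; exact ⟨α, by simpa using h⟩
    · rintro ⟨γ, hγ⟩
      by_cases h : γ = α
      · subst h; simpa using hγ
      · simp [Function.update_of_ne h] at hγ

theorem stmt11 {X : Type u} {J : Type v} {Y : J → Type w}
    (ν : ∀ α, Set (Set (Y α))) (hν : ∀ α, IsGT (ν α))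
    (φ : ∀ α, X → Y α)
    (hsep : ∀ x₁ x₂ : X, x₁ ≠ x₂ → ∃ α, φ α x₁ ≠ φ α x₂)
    (μ : Set (Set X))
    (hμ : μ = {U : Set X | ∃ M : ∀ α, Set (Y α),
      (∀ α, M α ∈ ν α) ∧ U = ⋃ α, φ α ⁻¹' M α}) :
    ((∀ α, GT1 (ν α)) → GT1 μ) ∧ ((∀ α, GT2 (ν α)) → GT2 μ) := by
  subst hμ
  constructor
  · intro h1 x y hxy
    obtain ⟨α, hα⟩ := hsep x y hxy
    obtain ⟨M, hM, hxM, hyM⟩ := h1 α _ _ hα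
    obtain ⟨N, hN, hNeq⟩ := preimage_mem_aux ν hν φ α M hM
    exact ⟨φ α ⁻¹' M, ⟨N, hN, hNeq⟩, hxM, hyM⟩
  · intro h2 x y hxy
    obtain ⟨α, hα⟩ := hsep x y hxy
    obtain ⟨U, hU, V, hV, hxU, hyV, hUV⟩ := h2 α _ _ hα
    obtain ⟨N, hN, hNeq⟩ := preimage_mem_aux ν hν φ α U hU
    obtain ⟨N', hN', hNeq'⟩ := preimage_mem_aux ν hν φ α V hV
    exact ⟨φ α ⁻¹' U, ⟨N, hN, hNeq⟩, φ α ⁻¹' V, ⟨N', hN', hNeq'⟩, hxU, hyV,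
      hUV.preimage _⟩
end

section
/- Let (X, μ) be a GTS. Define x ≡ y for x, y ∈ X by: for every M ∈ μ, x ∈ M if and only if y ∈ M; let Y := X/≡ with quotient map q : X → Y, and let ν := {N ⊆ Y | q⁻¹(N) ∈ μ}. Then: (i) ν is a generalized topology on Y and (Y, ν) is T0; (ii) μ = {q⁻¹(N) | N ∈ ν}; (iii) for every T0 GTS (Z, ρ) and every continuous f : (X, μ) → (Z, ρ) there exists a unique continuous h : (Y, ν) → (Z, ρ) with h ∘ q = f; (iv) (X, μ) is regular (respectively completely regular) if and only if (Y, ν) is regular (respectively completely regular), and in that case (Y, ν) is T3 (respectively T3.5). -/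
universe u z

/-- The GTS `(X, μ)` is T0. -/
def GT0 {X : Type*} (μ : Set (Set X)) : Prop :=
  ∀ x y : X, x ≠ y → ∃ M ∈ μ, (x ∈ M ∧ y ∉ M) ∨ (y ∈ M ∧ x ∉ M)

/-- The equivalence `x ≡ y` of the T0-reflection: `x` and `y` belong to the same
`μ`-open sets. -/
def gtEquiv {X : Type*} (μ : Set (Set X)) (x y : X) : Prop :=
  ∀ M ∈ μ, (x ∈ M ↔ y ∈ M)

section Aux

variable {X : Type*} {μ : Set (Set X)}

private lemma gtEquiv_of_mk_eq {x y : X}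
    (h : Quot.mk (gtEquiv μ) x = Quot.mk (gtEquiv μ) y) : gtEquiv μ x y := by
  have h' := Quot.eqvGen_exact h
  clear h
  induction h' with
  | rel a b hab => exact hab
  | refl a => exact fun M _ => Iff.rfl
  | symm a b _ ih => exact fun M hM => (ih M hM).symm
  | trans a b c _ _ ih1 ih2 => exact fun M hM => (ih1 M hM).trans (ih2 M hM)

private lemma sat_inv {S : Set X} (hS : ∀ x y : X, gtEquiv μ x y → x ∈ S → y ∈ S) :
    Quot.mk (gtEquiv μ) ⁻¹' (Quot.mk (gtEquiv μ) '' S) = S := by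
  ext x
  constructor
  · rintro ⟨y, hy, hxy⟩
    exact hS y x (gtEquiv_of_mk_eq hxy) hy
  · intro hx
    exact ⟨x, hx, rfl⟩

private lemma sat_open {M : Set X} (hM : M ∈ μ) :
    Quot.mk (gtEquiv μ) ⁻¹' (Quot.mk (gtEquiv μ) '' M) = M :=
  sat_inv (fun _ _ h hx => (h M hM).mp hx)

private lemma sat_closed {F : Set X} (hF : Fᶜ ∈ μ) :
    Quot.mk (gtEquiv μ) ⁻¹' (Quot.mk (gtEquiv μ) '' F) = F :=
  sat_inv (fun x y h hx => by
    by_contra hy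
    exact ((h Fᶜ hF).mpr hy) hx)

private lemma f_const_on_equiv {Z : Type*} {ρ : Set (Set Z)} (hρ : GT0 ρ)
    {f : X → Z} (hf : GCont μ ρ f) {x y : X} (h : gtEquiv μ x y) : f x = f y := by
  by_contra hne
  obtain ⟨W, hW, hcase⟩ := hρ _ _ hne
  have hpre := hf W hW
  rcases hcase with ⟨h1, h2⟩ | ⟨h1, h2⟩
  · exact h2 ((h _ hpre).mp h1)
  · exact h2 ((h _ hpre).mpr h1)

private lemma Iio_mem_gamma0 (a : unitInterval) : Set.Iio a ∈ gamma0 :=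
  ⟨{Set.Iio a}, by rintro V rfl; exact Or.inl ⟨a, rfl⟩, (Set.sUnion_singleton _).symm⟩

private lemma Ioi_mem_gamma0 (b : unitInterval) : Set.Ioi b ∈ gamma0 :=
  ⟨{Set.Ioi b}, by rintro V rfl; exact Or.inr ⟨b, rfl⟩, (Set.sUnion_singleton _).symm⟩

private lemma gamma0_t0 : GT0 gamma0 := by
  intro s t hst
  rcases lt_or_gt_of_ne hst with h | h
  · exact ⟨Set.Iio t, Iio_mem_gamma0 t, Or.inl ⟨h, lt_irrefl t⟩⟩
  · exact ⟨Set.Iio s, Iio_mem_gamma0 s, Or.inr ⟨h, lt_irrefl s⟩⟩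

private lemma regular_of_cr (h : GCompletelyRegular μ) : GRegular μ := by
  intro x F hF hxF
  obtain ⟨f, hf, hf0, hf1⟩ := h x F hF hxF
  set c : unitInterval := ⟨1/2, by norm_num⟩ with hc
  refine ⟨f ⁻¹' Set.Iio c, hf _ (Iio_mem_gamma0 c), f ⁻¹' Set.Ioi c, hf _ (Ioi_mem_gamma0 c),
    ?_, ?_, ?_⟩
  · show f x ∈ Set.Iio c
    rw [hf0]
    show (0 : unitInterval) < c
    rw [← Subtype.coe_lt_coe]
    norm_num [hc]
  · intro y hy
    show f y ∈ Set.Ioi c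
    rw [hf1 y hy]
    show c < (1 : unitInterval)
    rw [← Subtype.coe_lt_coe]
    norm_num [hc]
  · rw [Set.disjoint_left]
    rintro u h1 h2
    simp only [Set.mem_preimage, Set.mem_Iio] at h1
    simp only [Set.mem_preimage, Set.mem_Ioi] at h2
    exact absurd (h1.trans h2) (lt_irrefl _)

private lemma t1_of_t0_regular {Y : Type*} {ν : Set (Set Y)} (h0 : GT0 ν) (hr : GRegular ν) :
    GT1 ν := by
  intro a b hab
  obtain ⟨M, hM, hc⟩ := h0 a b hab
  rcases hc with ⟨h1, h2⟩ | ⟨h1, h2⟩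
  · exact ⟨M, hM, h1, h2⟩
  · obtain ⟨U, hU, V, hV, hbU, hMV, hdis⟩ := hr b Mᶜ (by simpa using hM) (by simpa using h1)
    exact ⟨V, hV, hMV h2, fun hbV => Set.disjoint_left.mp hdis hbU hbV⟩

end Aux

theorem stmt13 {X : Type u} (μ : Set (Set X)) (hμ : IsGT μ)
    (ν : Set (Set (Quot (gtEquiv μ))))
    (hν : ν = {N : Set (Quot (gtEquiv μ)) | Quot.mk (gtEquiv μ) ⁻¹' N ∈ μ}) :
    (IsGT ν ∧ GT0 ν) ∧
    (μ = {U : Set X | ∃ N ∈ ν, U = Quot.mk (gtEquiv μ) ⁻¹' N}) ∧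
    (∀ (Z : Type z) (ρ : Set (Set Z)), IsGT ρ → GT0 ρ →
      ∀ f : X → Z, GCont μ ρ f →
        ∃! h : Quot (gtEquiv μ) → Z, GCont ν ρ h ∧ h ∘ Quot.mk (gtEquiv μ) = f) ∧
    ((GRegular μ ↔ GRegular ν) ∧ (GRegular μ → GRegular ν ∧ GT1 ν)) ∧
    ((GCompletelyRegular μ ↔ GCompletelyRegular ν) ∧
      (GCompletelyRegular μ → GCompletelyRegular ν ∧ GT1 ν)) := by
  subst hν
  set q := Quot.mk (gtEquiv μ) with hq
  -- (i)
  have hGT : IsGT {N : Set (Quot (gtEquiv μ)) | q ⁻¹' N ∈ μ} := by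
    constructor
    · show q ⁻¹' ∅ ∈ μ
      simpa using hμ.1
    · intro S hS
      show q ⁻¹' ⋃₀ S ∈ μ
      rw [Set.preimage_sUnion, ← Set.sUnion_image]
      apply hμ.2
      rintro _ ⟨N, hN, rfl⟩
      exact hS hN
  have hT0 : GT0 {N : Set (Quot (gtEquiv μ)) | q ⁻¹' N ∈ μ} := by
    intro a b hab
    obtain ⟨x, rfl⟩ := Quot.exists_rep a
    obtain ⟨y, rfl⟩ := Quot.exists_rep b
    have hne : ¬ gtEquiv μ x y := fun h => hab (Quot.sound h)
    simp only [gtEquiv, not_forall] at hne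
    obtain ⟨M, hM, hxy⟩ := hne
    refine ⟨q '' M, by show q ⁻¹' (q '' M) ∈ μ; rw [sat_open hM]; exact hM, ?_⟩
    have hmem : ∀ z : X, q z ∈ q '' M ↔ z ∈ M := fun z => by
      conv_lhs => rw [show (q z ∈ q '' M) = (z ∈ q ⁻¹' (q '' M)) from rfl, sat_open hM]
    rcases Classical.em (x ∈ M) with hx | hx
    · exact Or.inl ⟨(hmem x).mpr hx, fun h => hxy (iff_of_true hx ((hmem y).mp h))⟩
    · have hy : y ∈ M := by
        by_contra hy
        exact hxy (iff_of_false hx hy)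
      exact Or.inr ⟨(hmem y).mpr hy, fun h => hx ((hmem x).mp h)⟩
  refine ⟨⟨hGT, hT0⟩, ?_, ?_, ?_, ?_⟩
  -- (ii)
  · apply Set.Subset.antisymm
    · intro M hM
      exact ⟨q '' M, by show q ⁻¹' (q '' M) ∈ μ; rw [sat_open hM]; exact hM,
        (sat_open hM).symm⟩
    · rintro _ ⟨N, hN, rfl⟩
      exact hN
  -- (iii)
  · intro Z ρ _ hρ0 f hf
    refine ⟨Quot.lift f (fun a b hab => f_const_on_equiv hρ0 hf hab), ⟨?_, rfl⟩, ?_⟩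
    · intro W hW
      show q ⁻¹' (_ ⁻¹' W) ∈ μ
      exact hf W hW
    · rintro h' ⟨hcont, hcomp⟩
      funext a
      obtain ⟨x, rfl⟩ := Quot.exists_rep a
      exact congrFun hcomp x
  -- (iv) regular
  · have fwd : GRegular μ → GRegular {N : Set (Quot (gtEquiv μ)) | q ⁻¹' N ∈ μ} := by
      intro hr a F hFc haF
      obtain ⟨x, rfl⟩ := Quot.exists_rep a
      have hFc' : (q ⁻¹' F)ᶜ ∈ μ := by
        rw [← Set.preimage_compl]; exact hFc
      obtain ⟨U, hU, V, hV, hxU, hFV, hdis⟩ := hr x (q ⁻¹' F) hFc' haF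
      refine ⟨q '' U, by show q ⁻¹' (q '' U) ∈ μ; rw [sat_open hU]; exact hU,
        q '' V, by show q ⁻¹' (q '' V) ∈ μ; rw [sat_open hV]; exact hV,
        ⟨x, hxU, rfl⟩, ?_, ?_⟩
      · intro b hb
        obtain ⟨y, rfl⟩ := Quot.exists_rep b
        exact ⟨y, hFV hb, rfl⟩
      · rw [Set.disjoint_left]
        rintro b hbU hbV
        obtain ⟨u, rfl⟩ := Quot.exists_rep b
        have h1 : u ∈ U := by rw [← sat_open hU]; exact hbU
        have h2 : u ∈ V := by rw [← sat_open hV]; exact hbV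
        exact Set.disjoint_left.mp hdis h1 h2
    have bwd : GRegular {N : Set (Quot (gtEquiv μ)) | q ⁻¹' N ∈ μ} → GRegular μ := by
      intro hr x F hFc hxF
      have hsat : q ⁻¹' (q '' F) = F := sat_closed hFc
      have hF' : (q '' F)ᶜ ∈ {N : Set (Quot (gtEquiv μ)) | q ⁻¹' N ∈ μ} := by
        show q ⁻¹' (q '' F)ᶜ ∈ μ
        rw [Set.preimage_compl, hsat]
        exact hFc
      have hx' : q x ∉ q '' F := fun h => hxF (by rw [← hsat]; exact h)
      obtain ⟨U', hU', V', hV', hxU', hFV', hdis'⟩ := hr (q x) (q '' F) hF' hx'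
      refine ⟨q ⁻¹' U', hU', q ⁻¹' V', hV', hxU', ?_, ?_⟩
      · intro y hy
        exact hFV' ⟨y, hy, rfl⟩
      · rw [Set.disjoint_left]
        intro u h1 h2
        exact Set.disjoint_left.mp hdis' h1 h2
    exact ⟨⟨fwd, bwd⟩, fun h => ⟨fwd h, t1_of_t0_regular hT0 (fwd h)⟩⟩
  -- (iv) completely regular
  · have fwd : GCompletelyRegular μ →
        GCompletelyRegular {N : Set (Quot (gtEquiv μ)) | q ⁻¹' N ∈ μ} := by
      intro hcr a F hFc haF
      obtain ⟨x, rfl⟩ := Quot.exists_rep a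
      have hFc' : (q ⁻¹' F)ᶜ ∈ μ := by
        rw [← Set.preimage_compl]; exact hFc
      obtain ⟨f, hf, hf0, hf1⟩ := hcr x (q ⁻¹' F) hFc' haF
      refine ⟨Quot.lift f (fun a b hab => f_const_on_equiv gamma0_t0 hf hab), ?_, hf0, ?_⟩
      · intro W hW
        show q ⁻¹' (_ ⁻¹' W) ∈ μ
        exact hf W hW
      · intro b hb
        obtain ⟨y, rfl⟩ := Quot.exists_rep b
        exact hf1 y hb
    have bwd : GCompletelyRegular {N : Set (Quot (gtEquiv μ)) | q ⁻¹' N ∈ μ} →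
        GCompletelyRegular μ := by
      intro hcr x F hFc hxF
      have hsat : q ⁻¹' (q '' F) = F := sat_closed hFc
      have hF' : (q '' F)ᶜ ∈ {N : Set (Quot (gtEquiv μ)) | q ⁻¹' N ∈ μ} := by
        show q ⁻¹' (q '' F)ᶜ ∈ μ
        rw [Set.preimage_compl, hsat]
        exact hFc
      have hx' : q x ∉ q '' F := fun h => hxF (by rw [← hsat]; exact h)
      obtain ⟨h, hh, hh0, hh1⟩ := hcr (q x) (q '' F) hF' hx'
      refine ⟨h ∘ q, ?_, hh0, ?_⟩
      · intro W hW
        exact hh W hW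
      · intro y hy
        exact hh1 (q y) ⟨y, hy, rfl⟩
    exact ⟨⟨fwd, bwd⟩, fun h =>
      ⟨fwd h, t1_of_t0_regular hT0 (regular_of_cr (fwd h))⟩⟩
end

section
/- A GTS (X, μ) is T3.5 if and only if there exist an index set J and an embedding f of (X, μ) into ([0,1]^J, γ₀^J), where γ₀^J is the product GT of J copies of ([0,1], γ₀). Moreover, if |X| ≥ 2, then J and f can be chosen so that f(X) is dense in ([0,1]^J, γ₀^J). -/
universe u

/-- `f` is an embedding of `(X, μ)` into `(Y, ν)`: it is injective and the
images of `μ`-open sets are exactly the traces of `ν`-open sets on `f(X)`. -/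
def GEmbedding {X Y : Type*} (μ : Set (Set X)) (ν : Set (Set Y)) (f : X → Y) : Prop :=
  Function.Injective f ∧
    {A : Set Y | ∃ M ∈ μ, A = f '' M} = {A : Set Y | ∃ N ∈ ν, A = N ∩ Set.range f}

/-- The product GT `γ₀^J` on `[0,1]^J`, the `J`-th power of `([0,1], γ₀)`. -/
def prodGT0 (J : Type u) : Set (Set (J → unitInterval)) :=
  {U | ∃ M : J → Set unitInterval, (∀ α, M α ∈ gamma0) ∧
    U = ⋃ α, (fun g => g α) ⁻¹' M α}

/-!
A nonempty `γ₀`-open set is a union of intervals `[0, a)` and `(b, 1]`, so it contains `0` or `1`,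
and a continuous self-map of `[0,1]` that is monotone or antitone is `γ₀`-continuous. Hence
truncated affine maps make `([0,1], γ₀)`, and with it every power `([0,1]^J, γ₀^J)`, a T3.5 space,
and T3.5 passes to embedded subspaces.

Conversely, let `G` be a family of continuous maps `X → [0,1]` separating points from closed
sets. Under the evaluation map `X → [0,1]^G` the image of an open `M` is cut out by the conditions
`g < 1` over those `g ∈ G` that equal `1` off `M`, so evaluation is an embedding. When `X` has two
points, `G` can be made of maps attaining both `0` and `1`; then every nonempty open set of the
product, which contains a point with a coordinate `0` or `1`, meets the image.
-/

open Set unitInterval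

section Gamma0

def gamma0Basis : Set (Set I) := range Iio ∪ range Ioi

lemma mem_gamma0_iff {U : Set I} :
    U ∈ gamma0 ↔ ∀ t ∈ U, ∃ V ∈ gamma0Basis, t ∈ V ∧ V ⊆ U := by
  constructor
  · rintro ⟨S, hS, rfl⟩ t ⟨V, hVS, htV⟩
    refine ⟨V, ?_, htV, subset_sUnion_of_mem hVS⟩
    rcases hS V hVS with ⟨a, rfl⟩ | ⟨b, rfl⟩
    exacts [Or.inl ⟨a, rfl⟩, Or.inr ⟨b, rfl⟩]
  · intro h
    refine ⟨{V | V ∈ gamma0Basis ∧ V ⊆ U}, ?_, ?_⟩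
    · rintro V ⟨⟨a, rfl⟩ | ⟨b, rfl⟩, -⟩
      exacts [Or.inl ⟨a, rfl⟩, Or.inr ⟨b, rfl⟩]
    · refine Subset.antisymm (fun t ht => ?_) (sUnion_subset fun V hV => hV.2)
      obtain ⟨V, hV, htV, hVU⟩ := h t ht
      exact ⟨V, ⟨hV, hVU⟩, htV⟩

lemma gamma0Basis_subset : gamma0Basis ⊆ gamma0 :=
  fun V hV => mem_gamma0_iff.2 fun _ ht => ⟨V, hV, ht, subset_rfl⟩

lemma empty_mem_gamma0 : (∅ : Set I) ∈ gamma0 :=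
  mem_gamma0_iff.2 fun _ ht => ht.elim

lemma zero_mem_or_one_mem_of_mem_gamma0 {U : Set I} {t : I} (hU : U ∈ gamma0) (ht : t ∈ U) :
    0 ∈ U ∨ 1 ∈ U := by
  obtain ⟨V, ⟨a, rfl⟩ | ⟨b, rfl⟩, htV, hVU⟩ := mem_gamma0_iff.1 hU t ht
  · exact Or.inl (hVU (lt_of_le_of_lt nonneg' htV))
  · exact Or.inr (hVU (lt_of_lt_of_le htV le_one'))

lemma mem_gamma0_of_isOpen {S : Set I} (hS : IsOpen S) (hlu : IsLowerSet S ∨ IsUpperSet S) :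
    S ∈ gamma0 := by
  refine mem_gamma0_iff.2 fun t ht => ?_
  rcases hlu with hlow | hup
  · rcases (le_one' : t ≤ 1).lt_or_eq with ht1 | rfl
    · obtain ⟨u, ⟨htu, -⟩, hsub⟩ := exists_Ico_subset_of_mem_nhds' (hS.mem_nhds ht) ht1
      refine ⟨Iio u, Or.inl ⟨u, rfl⟩, htu, fun s hs => ?_⟩
      rcases le_or_gt s t with hst | hts
      exacts [hlow hst ht, hsub ⟨hts.le, hs⟩]
    · exact ⟨Ioi 0, Or.inr ⟨0, rfl⟩, (zero_lt_one : (0 : I) < 1), fun s _ => hlow le_one' ht⟩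
  · rcases (nonneg' : 0 ≤ t).lt_or_eq with ht0 | rfl
    · obtain ⟨u, ⟨-, hut⟩, hsub⟩ := exists_Ioc_subset_of_mem_nhds' (hS.mem_nhds ht) ht0
      refine ⟨Ioi u, Or.inr ⟨u, rfl⟩, hut, fun s hs => ?_⟩
      rcases le_or_gt t s with hts | hst
      exacts [hup hts ht, hsub ⟨hs, hst.le⟩]
    · exact ⟨Iio 1, Or.inl ⟨1, rfl⟩, (zero_lt_one : (0 : I) < 1), fun s _ => hup nonneg' ht⟩

lemma gcont_gamma0_of_continuous {h : I → I} (hc : Continuous h) (hm : Monotone h ∨ Antitone h) :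
    GCont gamma0 gamma0 h := by
  intro U hU
  refine mem_gamma0_iff.2 fun t ht => ?_
  obtain ⟨V, hV, htV, hVU⟩ := mem_gamma0_iff.1 hU (h t) ht
  obtain ⟨hVo, hVlu⟩ : IsOpen V ∧ (IsLowerSet V ∨ IsUpperSet V) := by
    rcases hV with ⟨a, rfl⟩ | ⟨b, rfl⟩
    exacts [⟨isOpen_Iio, Or.inl (isLowerSet_Iio a)⟩, ⟨isOpen_Ioi, Or.inr (isUpperSet_Ioi b)⟩]
  have hpre : h ⁻¹' V ∈ gamma0 := by
    refine mem_gamma0_of_isOpen (hVo.preimage hc) ?_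
    rcases hm with hm | hm <;> rcases hVlu with hV | hV
    exacts [Or.inl fun _ _ hab => hV (hm hab), Or.inr fun _ _ hab => hV (hm hab),
      Or.inr fun _ _ hab => hV (hm hab), Or.inl fun _ _ hab => hV (hm hab)]
  obtain ⟨W, hW, htW, hWV⟩ := mem_gamma0_iff.1 hpre t htV
  exact ⟨W, hW, htW, hWV.trans (preimage_mono hVU)⟩

lemma gt1_gamma0 : GT1 gamma0 := by
  intro s t hst
  rcases hst.lt_or_gt with hlt | hgt
  · exact ⟨Iio t, gamma0Basis_subset (Or.inl ⟨t, rfl⟩), hlt, lt_irrefl t⟩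
  · exact ⟨Ioi t, gamma0Basis_subset (Or.inr ⟨t, rfl⟩), hgt, lt_irrefl t⟩

lemma exists_monotone_eq_zero_eq_one {c a : I} (hca : c < a) :
    ∃ h : I → I, Continuous h ∧ Monotone h ∧ h c = 0 ∧ ∀ s, a ≤ s → h s = 1 := by
  have hpos : (0 : ℝ) < a - c := sub_pos.2 hca
  refine ⟨fun s => projIcc 0 1 zero_le_one (((s : ℝ) - c) / (a - c)),
    continuous_projIcc.comp (by fun_prop), (monotone_projIcc _).comp fun s t hst => ?_, ?_,
    fun s hs => ?_⟩
  · exact div_le_div_of_nonneg_right (sub_le_sub_right (Subtype.coe_le_coe.2 hst) _) hpos.le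
  · simp only [sub_self, zero_div]
    exact projIcc_left _
  · refine projIcc_of_right_le _ ((one_le_div₀ hpos).2 ?_)
    exact sub_le_sub_right (Subtype.coe_le_coe.2 hs) _

lemma gCompletelyRegular_gamma0 : GCompletelyRegular gamma0 := by
  intro t F hF htF
  obtain ⟨V, ⟨a, rfl⟩ | ⟨b, rfl⟩, htV, hVF⟩ := mem_gamma0_iff.1 hF t htF
  · obtain ⟨h, hc, hm, h0, h1⟩ := exists_monotone_eq_zero_eq_one htV
    exact ⟨h, gcont_gamma0_of_continuous hc (Or.inl hm), h0,
      fun s hs => h1 s (not_lt.1 fun hsa => hVF hsa hs)⟩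
  · -- reflect through `σ t = 1 - t` to reduce to the previous case
    obtain ⟨h, hc, hm, h0, h1⟩ := exists_monotone_eq_zero_eq_one (symm_lt_symm.2 htV)
    refine ⟨h ∘ σ, gcont_gamma0_of_continuous (hc.comp continuous_symm)
      (Or.inr (hm.comp_antitone fun _ _ => symm_le_symm.2)), h0, fun s hs => ?_⟩
    exact h1 _ (symm_le_symm.2 (not_lt.1 fun hbs => hVF hbs hs))

end Gamma0

section GeneralizedTopology

variable {X Y : Type*} {μ : Set (Set X)} {ν : Set (Set Y)}

lemma IsGT.iUnion_mem {ι : Sort*} (hμ : IsGT μ) {U : ι → Set X} (hU : ∀ i, U i ∈ μ) :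
    ⋃ i, U i ∈ μ := by
  rw [← sUnion_range]
  exact hμ.2 _ (range_subset_iff.2 hU)

lemma GT1.compl_singleton_mem (ht1 : GT1 μ) (hμ : IsGT μ) (z : X) : ({z}ᶜ : Set X) ∈ μ := by
  have : ({z}ᶜ : Set X) = ⋃₀ {M | M ∈ μ ∧ z ∉ M} := by
    ext x
    refine ⟨fun hxz => ?_, fun ⟨M, ⟨_, hzM⟩, hxM⟩ hxz => hzM (hxz ▸ hxM)⟩
    obtain ⟨M, hM, hxM, hzM⟩ := ht1 x z hxz
    exact ⟨M, ⟨hM, hzM⟩, hxM⟩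
  rw [this]
  exact hμ.2 _ fun M hM => hM.1

lemma GCont.comp {Z : Type*} {ρ : Set (Set Z)} {g : Y → Z} {f : X → Y}
    (hg : GCont ν ρ g) (hf : GCont μ ν f) : GCont μ ρ (g ∘ f) :=
  fun N hN => hf _ (hg N hN)

lemma GEmbedding.gcont {f : X → Y} (hf : GEmbedding μ ν f) : GCont μ ν f := by
  intro N hN
  obtain ⟨M, hM, hMN⟩ : N ∩ range f ∈ {A | ∃ M ∈ μ, A = f '' M} := hf.2 ▸ ⟨N, hN, rfl⟩
  rwa [← preimage_inter_range, hMN, preimage_image_eq _ hf.1]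

lemma GEmbedding.exists_preimage_eq {f : X → Y} (hf : GEmbedding μ ν f) {M : Set X} (hM : M ∈ μ) :
    ∃ N ∈ ν, f ⁻¹' N = M := by
  obtain ⟨N, hN, hMN⟩ : f '' M ∈ {A | ∃ N ∈ ν, A = N ∩ range f} := hf.2 ▸ ⟨M, hM, rfl⟩
  refine ⟨N, hN, ?_⟩
  rw [← preimage_inter_range, ← hMN, preimage_image_eq _ hf.1]

lemma GT1.comap {f : X → Y} (hν : GT1 ν) (hf : Function.Injective f) (hc : GCont μ ν f) :
    GT1 μ := by
  intro x y hxy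
  obtain ⟨N, hN, hx, hy⟩ := hν _ _ (hf.ne hxy)
  exact ⟨f ⁻¹' N, hc N hN, hx, hy⟩

lemma GCompletelyRegular.comap {f : X → Y} (hν : GCompletelyRegular ν) (hf : GEmbedding μ ν f) :
    GCompletelyRegular μ := by
  intro x F hF hxF
  obtain ⟨N, hN, hNF⟩ := hf.exists_preimage_eq hF
  have hxN : f x ∈ N := show x ∈ f ⁻¹' N from hNF ▸ hxF
  obtain ⟨h, hc, h0, h1⟩ := hν (f x) Nᶜ (by rwa [compl_compl]) (not_not.2 hxN)
  refine ⟨h ∘ f, hc.comp hf.gcont, h0, fun y hy => h1 _ fun hyN => ?_⟩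
  exact (show y ∈ Fᶜ from hNF ▸ hyN) hy

lemma gClosure_eq_univ_of_forall_inter_nonempty {A : Set X}
    (h : ∀ U ∈ μ, U.Nonempty → (U ∩ A).Nonempty) : gClosure μ A = univ := by
  refine eq_univ_of_forall fun x => mem_sInter.2 fun F ⟨hF, hAF⟩ => ?_
  by_contra hxF
  obtain ⟨a, haF, haA⟩ := h _ hF ⟨x, hxF⟩
  exact haF (hAF haA)

end GeneralizedTopology

section Product

variable {J : Type u}

lemma biUnion_preimage_eval_mem_prodGT0 (s : Set J) {V : J → Set I}
    (hV : ∀ α ∈ s, V α ∈ gamma0) : (⋃ α ∈ s, (fun p : J → I => p α) ⁻¹' V α) ∈ prodGT0 J := by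
  classical
  refine ⟨fun α => if α ∈ s then V α else ∅, fun α => ?_, iUnion_congr fun α => ?_⟩
  all_goals by_cases hα : α ∈ s <;> simp [hα, hV, empty_mem_gamma0]

lemma gcont_eval (α : J) : GCont (prodGT0 J) gamma0 fun p : J → I => p α := by
  intro V hV
  simpa using biUnion_preimage_eval_mem_prodGT0 {α} (V := fun _ => V) (by simpa using hV)

lemma gcont_prodGT0_of_forall {X : Type*} {μ : Set (Set X)} (hμ : IsGT μ) {f : X → J → I}
    (hf : ∀ α, GCont μ gamma0 fun x => f x α) : GCont μ (prodGT0 J) f := by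
  rintro _ ⟨M, hM, rfl⟩
  rw [preimage_iUnion]
  exact hμ.iUnion_mem fun α => hf α _ (hM α)

lemma gt1_prodGT0 : GT1 (prodGT0 J) := by
  intro p q hpq
  obtain ⟨α, hα⟩ := Function.ne_iff.1 hpq
  obtain ⟨V, hV, hp, hq⟩ := gt1_gamma0 _ _ hα
  exact ⟨_, gcont_eval α V hV, hp, hq⟩

lemma gCompletelyRegular_prodGT0 : GCompletelyRegular (prodGT0 J) := by
  rintro p F ⟨M, hM, hFM⟩ hpF
  obtain ⟨α, hpα⟩ : ∃ α, p α ∈ M α := by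
    rwa [← mem_compl_iff, hFM, mem_iUnion] at hpF
  obtain ⟨h, hc, h0, h1⟩ := gCompletelyRegular_gamma0 (p α) (M α)ᶜ (by simpa using hM α)
    (not_not.2 hpα)
  refine ⟨fun q => h (q α), hc.comp (gcont_eval α), h0, fun q hq => h1 _ fun hqα => ?_⟩
  exact (show q ∈ Fᶜ from hFM ▸ mem_iUnion.2 ⟨α, hqα⟩) hq

lemma gClosure_range_eq_univ {X : Type*} {f : X → J → I}
    (hf : ∀ α, (0 : I) ∈ range (fun x => f x α) ∧ (1 : I) ∈ range fun x => f x α) :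
    gClosure (prodGT0 J) (range f) = univ := by
  refine gClosure_eq_univ_of_forall_inter_nonempty fun N ⟨M, hM, hN⟩ ⟨p, hp⟩ => ?_
  subst hN
  obtain ⟨α, hpα⟩ := mem_iUnion.1 hp
  obtain ⟨x, hx⟩ : ∃ x, f x α ∈ M α := by
    rcases zero_mem_or_one_mem_of_mem_gamma0 (hM α) hpα with h | h
    · obtain ⟨x, hx⟩ := (hf α).1
      exact ⟨x, by rwa [show f x α = _ from hx]⟩
    · obtain ⟨x, hx⟩ := (hf α).2
      exact ⟨x, by rwa [show f x α = _ from hx]⟩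
  exact ⟨f x, mem_iUnion.2 ⟨α, hx⟩, mem_range_self x⟩

end Product

section Embedding

variable {X : Type u} {μ : Set (Set X)}

def GSeparatesPointsFromClosed (μ : Set (Set X)) (G : Set (X → I)) : Prop :=
  ∀ (x : X) (F : Set X), Fᶜ ∈ μ → x ∉ F → ∃ g ∈ G, g x = 0 ∧ ∀ y ∈ F, g y = 1

lemma gEmbedding_eval (hμ : IsGT μ) (ht1 : GT1 μ) {G : Set (X → I)}
    (hG : ∀ g ∈ G, GCont μ gamma0 g) (hsep : GSeparatesPointsFromClosed μ G) :
    GEmbedding μ (prodGT0 G) fun x g => g.1 x := by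
  set f : X → G → I := fun x g => g.1 x
  have hf : GCont μ (prodGT0 G) f := gcont_prodGT0_of_forall hμ fun g => hG g g.2
  refine ⟨fun x y hxy => by_contra fun hne => ?_, ?_⟩
  · obtain ⟨g, hg, hx, hy⟩ := hsep x {y} (ht1.compl_singleton_mem hμ y) hne
    have : g x = g y := congrFun hxy ⟨g, hg⟩
    rw [hx, hy y rfl] at this
    exact zero_ne_one this
  ext A
  constructor
  · rintro ⟨M, hM, rfl⟩
    refine ⟨⋃ g ∈ {g : G | ∀ z ∉ M, g.1 z = 1}, (fun p : G → I => p g) ⁻¹' Iio 1,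
      biUnion_preimage_eval_mem_prodGT0 _ fun _ _ => gamma0Basis_subset (Or.inl ⟨1, rfl⟩), ?_⟩
    ext p
    constructor
    · rintro ⟨x, hx, rfl⟩
      obtain ⟨g, hg, h0, h1⟩ := hsep x Mᶜ (by rwa [compl_compl]) (not_not.2 hx)
      refine ⟨mem_iUnion₂.2 ⟨⟨g, hg⟩, h1, ?_⟩, mem_range_self x⟩
      show g x < 1
      rw [h0]
      exact zero_lt_one
    · rintro ⟨hp, x, rfl⟩
      obtain ⟨g, hg1, hgx⟩ := mem_iUnion₂.1 hp
      refine ⟨x, by_contra fun hx => ?_, rfl⟩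
      exact (lt_irrefl (1 : I)) (hg1 x hx ▸ hgx)
  · rintro ⟨N, hN, rfl⟩
    exact ⟨f ⁻¹' N, hf N hN, image_preimage_eq_inter_range.symm⟩

lemma GCompletelyRegular.gSeparatesPointsFromClosed_of_nontrivial (hcr : GCompletelyRegular μ)
    (hμ : IsGT μ) (ht1 : GT1 μ) (hX : ∃ x y : X, x ≠ y) :
    GSeparatesPointsFromClosed μ {g | GCont μ gamma0 g ∧ 0 ∈ range g ∧ 1 ∈ range g} := by
  intro x F hF hxF
  suffices ∃ g, GCont μ gamma0 g ∧ g x = 0 ∧ (∀ y ∈ F, g y = 1) ∧ 1 ∈ range g by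
    obtain ⟨g, hc, h0, h1, hr⟩ := this
    exact ⟨g, ⟨hc, ⟨x, h0⟩, hr⟩, h0, h1⟩
  rcases F.eq_empty_or_nonempty with rfl | ⟨y, hy⟩
  · have : Nontrivial X := ⟨hX⟩
    obtain ⟨y, hyx⟩ := exists_ne x
    obtain ⟨g, hc, h0, h1⟩ := hcr x {y} (ht1.compl_singleton_mem hμ y) hyx.symm
    exact ⟨g, hc, h0, fun _ h => h.elim, y, h1 y rfl⟩
  · obtain ⟨g, hc, h0, h1⟩ := hcr x F hF hxF
    exact ⟨g, hc, h0, h1, y, h1 y hy⟩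

end Embedding

theorem stmt14 {X : Type u} (μ : Set (Set X)) (hμ : IsGT μ) :
    ((GCompletelyRegular μ ∧ GT1 μ) ↔
      ∃ (J : Type u) (f : X → (J → unitInterval)), GEmbedding μ (prodGT0 J) f) ∧
    ((∃ x y : X, x ≠ y) → (GCompletelyRegular μ ∧ GT1 μ) →
      ∃ (J : Type u) (f : X → (J → unitInterval)),
        GEmbedding μ (prodGT0 J) f ∧
          gClosure (prodGT0 J) (Set.range f) = Set.univ) := by
  refine ⟨⟨fun ⟨hcr, ht1⟩ => ?_, fun ⟨_, _, hf⟩ => ?_⟩, fun hX ⟨hcr, ht1⟩ => ?_⟩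
  · exact ⟨_, _, gEmbedding_eval (G := {g | GCont μ gamma0 g}) hμ ht1 (fun _ hg => hg) hcr⟩
  · exact ⟨gCompletelyRegular_prodGT0.comap hf, gt1_prodGT0.comap hf.1 hf.gcont⟩
  · exact ⟨_, _, gEmbedding_eval hμ ht1 (fun _ hg => hg.1)
      (hcr.gSeparatesPointsFromClosed_of_nontrivial hμ ht1 hX),
      gClosure_range_eq_univ fun g => g.2.2⟩
end

section
/- Let (X, ≤) and (Y, ≤) be linearly ordered sets, each with at least two elements, and let μ and ν be their order GTs. Then a map f : X → Y is (μ, ν)-continuous if and only if f is monotone increasing or monotone decreasing (not necessarily strictly) and f is continuous as a map between X and Y equipped with their order topologies. -/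
universe u v

/-- The order generalized topology on a linearly ordered set: arbitrary unions
of sets of the form `{x | x < a}` and `{x | x > b}`. -/
def ordGT (X : Type*) [LinearOrder X] : Set (Set X) :=
  {U | ∃ S : Set (Set X),
    (∀ V ∈ S, (∃ a : X, V = Set.Iio a) ∨ (∃ b : X, V = Set.Ioi b)) ∧ U = ⋃₀ S}

open Set

/-- Pointwise characterization of membership in the order GT. -/
lemma mem_ordGT_iff {X : Type*} [LinearOrder X] {U : Set X} :
    U ∈ ordGT X ↔
      ∀ x ∈ U, (∃ a, x < a ∧ Iio a ⊆ U) ∨ (∃ b, b < x ∧ Ioi b ⊆ U) := by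
  constructor
  · rintro ⟨S, hS, rfl⟩ x hx
    obtain ⟨V, hVS, hxV⟩ := hx
    rcases hS V hVS with ⟨a, rfl⟩ | ⟨b, rfl⟩
    · exact Or.inl ⟨a, hxV, fun y hy => ⟨_, hVS, hy⟩⟩
    · exact Or.inr ⟨b, hxV, fun y hy => ⟨_, hVS, hy⟩⟩
  · intro h
    refine ⟨{V | ((∃ a, V = Iio a) ∨ (∃ b, V = Ioi b)) ∧ V ⊆ U}, fun V hV => hV.1, ?_⟩
    apply Subset.antisymm
    · intro x hx
      rcases h x hx with ⟨a, hxa, hsub⟩ | ⟨b, hbx, hsub⟩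
      · exact ⟨Iio a, ⟨Or.inl ⟨a, rfl⟩, hsub⟩, hxa⟩
      · exact ⟨Ioi b, ⟨Or.inr ⟨b, rfl⟩, hsub⟩, hbx⟩
    · rintro x ⟨V, ⟨_, hVU⟩, hxV⟩
      exact hVU hxV

lemma ordGT_Iio {X : Type*} [LinearOrder X] (a : X) : Iio a ∈ ordGT X :=
  ⟨{Iio a}, by simp, by simp⟩

lemma ordGT_Ioi {X : Type*} [LinearOrder X] (b : X) : Ioi b ∈ ordGT X :=
  ⟨{Ioi b}, by simp, by simp⟩

lemma ordGT_isOpen {X : Type*} [LinearOrder X] [TopologicalSpace X] [OrderTopology X]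
    {U : Set X} (hU : U ∈ ordGT X) : IsOpen U := by
  obtain ⟨S, hS, rfl⟩ := hU
  refine isOpen_sUnion fun V hV => ?_
  rcases hS V hV with ⟨a, rfl⟩ | ⟨b, rfl⟩
  · exact isOpen_Iio
  · exact isOpen_Ioi

/-- an open lower set is in the order GT (when `X` has at least two points). -/
lemma ordGT_of_isLowerSet {X : Type*} [LinearOrder X] [TopologicalSpace X] [OrderTopology X]
    (hX : ∃ a b : X, a ≠ b) {U : Set X} (hU : IsOpen U) (hl : IsLowerSet U) :
    U ∈ ordGT X := by
  rw [mem_ordGT_iff]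
  intro x hx
  by_cases h : ∃ u, x < u
  · obtain ⟨u, hxu, hsub⟩ := exists_Ico_subset_of_mem_nhds (hU.mem_nhds hx) h
    exact Or.inl ⟨u, hxu, fun y hy =>
      (le_or_gt x y).elim (fun h' => hsub ⟨h', hy⟩) (fun h' => hl h'.le hx)⟩
  · obtain ⟨a, b, hab⟩ := hX
    have hp : ∃ p, p < x := by
      rcases ne_or_eq a x with h1 | rfl
      · exact h1.lt_or_gt.elim (fun h2 => ⟨a, h2⟩) (fun h2 => absurd ⟨a, h2⟩ h)
      · exact hab.symm.lt_or_gt.elim (fun h2 => ⟨b, h2⟩) (fun h2 => absurd ⟨b, h2⟩ h)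
    obtain ⟨p, hp⟩ := hp
    exact Or.inr ⟨p, hp, fun y _ =>
      hl (le_of_not_gt fun hxy => h ⟨y, hxy⟩) hx⟩

/-- an open upper set is in the order GT (when `X` has at least two points). -/
lemma ordGT_of_isUpperSet {X : Type*} [LinearOrder X] [TopologicalSpace X] [OrderTopology X]
    (hX : ∃ a b : X, a ≠ b) {U : Set X} (hU : IsOpen U) (hl : IsUpperSet U) :
    U ∈ ordGT X := by
  rw [mem_ordGT_iff]
  intro x hx
  by_cases h : ∃ l, l < x
  · obtain ⟨l, hlx, hsub⟩ := exists_Ioc_subset_of_mem_nhds (hU.mem_nhds hx) h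
    exact Or.inr ⟨l, hlx, fun y hy =>
      (le_or_gt y x).elim (fun h' => hsub ⟨hy, h'⟩) (fun h' => hl h'.le hx)⟩
  · obtain ⟨a, b, hab⟩ := hX
    have hp : ∃ p, x < p := by
      rcases ne_or_eq a x with h1 | rfl
      · exact h1.lt_or_gt.elim (fun h2 => absurd ⟨a, h2⟩ h) (fun h2 => ⟨a, h2⟩)
      · exact hab.symm.lt_or_gt.elim (fun h2 => absurd ⟨b, h2⟩ h) (fun h2 => ⟨b, h2⟩)
    obtain ⟨p, hp⟩ := hp
    exact Or.inl ⟨p, hp, fun y _ =>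
      hl (le_of_not_gt fun hxy => h ⟨y, hxy⟩) hx⟩

theorem stmt15 {X : Type u} {Y : Type v} [LinearOrder X] [LinearOrder Y]
    (hX : ∃ a b : X, a ≠ b) (hY : ∃ a b : Y, a ≠ b) (f : X → Y) :
    GCont (ordGT X) (ordGT Y) f ↔
      (Monotone f ∨ Antitone f) ∧
        @Continuous X Y (Preorder.topology X) (Preorder.topology Y) f := by
  letI : TopologicalSpace X := Preorder.topology X
  letI : TopologicalSpace Y := Preorder.topology Y
  haveI : OrderTopology X := ⟨rfl⟩
  haveI : OrderTopology Y := ⟨rfl⟩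
  constructor
  · intro hf
    -- key consequences of GCont
    have keyIio : ∀ (c : Y) (x : X), f x < c →
        (∀ y, y ≤ x → f y < c) ∨ (∀ y, x ≤ y → f y < c) := by
      intro c x hx
      have hU : f ⁻¹' Iio c ∈ ordGT X := hf _ (ordGT_Iio c)
      rcases mem_ordGT_iff.mp hU x hx with ⟨a, hxa, hsub⟩ | ⟨b, hbx, hsub⟩
      · exact Or.inl fun y hy => hsub (lt_of_le_of_lt hy hxa)
      · exact Or.inr fun y hy => hsub (lt_of_lt_of_le hbx hy)
    have keyIoi : ∀ (c : Y) (x : X), c < f x →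
        (∀ y, y ≤ x → c < f y) ∨ (∀ y, x ≤ y → c < f y) := by
      intro c x hx
      have hU : f ⁻¹' Ioi c ∈ ordGT X := hf _ (ordGT_Ioi c)
      rcases mem_ordGT_iff.mp hU x hx with ⟨a, hxa, hsub⟩ | ⟨b, hbx, hsub⟩
      · exact Or.inl fun y hy => hsub (lt_of_le_of_lt hy hxa)
      · exact Or.inr fun y hy => hsub (lt_of_lt_of_le hbx hy)
    constructor
    · -- monotone or antitone
      by_contra hmono
      rw [not_or] at hmono
      obtain ⟨a, b, c, hab, hbc, hdent⟩ :=
        not_monotone_not_antitone_iff_exists_le_le.mp hmono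
      rcases hdent with ⟨h1, h2⟩ | ⟨h1, h2⟩
      · -- strict local max at b
        have hm : max (f a) (f c) < f b := max_lt h1 h2
        rcases keyIoi (max (f a) (f c)) b hm with hl | hr
        · exact absurd (hl a hab) (not_lt.mpr (le_max_left _ _))
        · exact absurd (hr c hbc) (not_lt.mpr (le_max_right _ _))
      · -- strict local min at b
        have hm : f b < min (f a) (f c) := lt_min h1 h2
        rcases keyIio (min (f a) (f c)) b hm with hl | hr
        · exact absurd (hl a hab) (not_lt.mpr (min_le_left _ _))
        · exact absurd (hr c hbc) (not_lt.mpr (min_le_right _ _))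
    · -- continuity
      have : @Continuous X Y _
          (TopologicalSpace.generateFrom
            { s : Set Y | ∃ a : Y, s = { b : Y | a < b } ∨ s = { b : Y | b < a } }) f := by
        rw [continuous_generateFrom_iff]
        rintro s ⟨a, rfl | rfl⟩
        · exact ordGT_isOpen (hf _ (ordGT_Ioi a))
        · exact ordGT_isOpen (hf _ (ordGT_Iio a))
      exact this
  · rintro ⟨hmono, hcont⟩
    have hcont' : Continuous f := hcont
    have hray : ∀ N : Set Y, ((∃ a, N = Iio a) ∨ (∃ b, N = Ioi b)) →
        f ⁻¹' N ∈ ordGT X := by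
      rintro N (⟨a, rfl⟩ | ⟨b, rfl⟩)
      · rcases hmono with hm | hm
        · exact ordGT_of_isLowerSet hX (isOpen_Iio.preimage hcont')
            (fun x y hxy hx => lt_of_le_of_lt (hm hxy) hx)
        · exact ordGT_of_isUpperSet hX (isOpen_Iio.preimage hcont')
            (fun x y hxy hx => lt_of_le_of_lt (hm hxy) hx)
      · rcases hmono with hm | hm
        · exact ordGT_of_isUpperSet hX (isOpen_Ioi.preimage hcont')
            (fun x y hxy hx => lt_of_lt_of_le hx (hm hxy))
        · exact ordGT_of_isLowerSet hX (isOpen_Ioi.preimage hcont')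
            (fun x y hxy hx => lt_of_lt_of_le hx (hm hxy))
    rintro N ⟨S, hS, rfl⟩
    rw [mem_ordGT_iff]
    intro x hx
    obtain ⟨V, hVS, hxV⟩ := hx
    have hV : f ⁻¹' V ∈ ordGT X := hray V (hS V hVS)
    have hsubV : f ⁻¹' V ⊆ f ⁻¹' ⋃₀ S := fun y hy => ⟨V, hVS, hy⟩
    rcases mem_ordGT_iff.mp hV x hxV with ⟨a, hxa, hsub⟩ | ⟨b, hbx, hsub⟩
    · exact Or.inl ⟨a, hxa, hsub.trans hsubV⟩
    · exact Or.inr ⟨b, hbx, hsub.trans hsubV⟩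
end

section
/- Let (X_α, μ_α), α ∈ J, be an indexed family of normal GTS's. Then the product GT on ∏_{α∈J} X_α is normal. If moreover every (X_α, μ_α) is T4, then the product GT is T4. -/
universe v w

/-- The product generalized topology on `∀ α, X α`. -/
def prodGT {J : Type v} {Xa : J → Type w} (μa : ∀ α, Set (Set (Xa α))) :
    Set (Set (∀ α, Xa α)) :=
  {U | ∃ M : ∀ α, Set (Xa α), (∀ α, M α ∈ μa α) ∧ U = ⋃ α, (fun x => x α) ⁻¹' M α}

lemma single_mem_prodGT {J : Type v} {Xa : J → Type w}
    (μa : ∀ α, Set (Set (Xa α))) (h0 : ∀ α, (∅ : Set (Xa α)) ∈ μa α)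
    (α₀ : J) (M : Set (Xa α₀)) (hM : M ∈ μa α₀) :
    (fun x : ∀ α, Xa α => x α₀) ⁻¹' M ∈ prodGT μa := by
  classical
  refine ⟨Function.update (fun α => ∅) α₀ M, ?_, ?_⟩
  · intro α
    by_cases h : α = α₀
    · subst h; simpa using hM
    · simpa [Function.update_of_ne h] using h0 α
  · ext x
    simp only [Set.mem_preimage, Set.mem_iUnion]
    constructor
    · intro hx; exact ⟨α₀, by simpa using hx⟩
    · rintro ⟨α, hα⟩
      by_cases h : α = α₀
      · subst h; simpa using hα
      · simp [Function.update_of_ne h] at hα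

theorem stmt16 {J : Type v} {Xa : J → Type w}
    (μa : ∀ α, Set (Set (Xa α))) (hμ : ∀ α, IsGT (μa α)) :
    ((∀ α, GNormal (μa α)) → GNormal (prodGT μa)) ∧
    ((∀ α, GNormal (μa α) ∧ GT1 (μa α)) →
      GNormal (prodGT μa) ∧ GT1 (prodGT μa)) := by
  classical
  have h0 : ∀ α, (∅ : Set (Xa α)) ∈ μa α := fun α => (hμ α).1
  have hnorm : (∀ α, GNormal (μa α)) → GNormal (prodGT μa) := by
    intro hn F₁ F₂ h1 h2 hd
    obtain ⟨M, hM, hMeq⟩ := h1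
    obtain ⟨N, hN, hNeq⟩ := h2
    have hF₁ : ∀ x, x ∈ F₁ ↔ ∀ α, x α ∉ M α := by
      intro x
      have h : x ∉ F₁ᶜ ↔ ∀ α, x α ∉ M α := by rw [hMeq]; simp
      simpa using h
    have hF₂ : ∀ x, x ∈ F₂ ↔ ∀ α, x α ∉ N α := by
      intro x
      have h : x ∉ F₂ᶜ ↔ ∀ α, x α ∉ N α := by rw [hNeq]; simp
      simpa using h
    have key : ∃ α₀, Disjoint (M α₀)ᶜ (N α₀)ᶜ := by
      by_contra hc
      push_neg at hc
      have hch : ∀ α, ∃ y : Xa α, y ∉ M α ∧ y ∉ N α := by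
        intro α
        obtain ⟨y, hy⟩ := Set.not_disjoint_iff.mp (hc α)
        exact ⟨y, hy.1, hy.2⟩
      choose x hx1 hx2 using hch
      have hmem1 : x ∈ F₁ := (hF₁ x).mpr hx1
      have hmem2 : x ∈ F₂ := (hF₂ x).mpr hx2
      exact (Set.disjoint_left.mp hd hmem1) hmem2
    obtain ⟨α₀, hdisj⟩ := key
    obtain ⟨U, hU, V, hV, hCU, hDV, hUV⟩ :=
      hn α₀ (M α₀)ᶜ (N α₀)ᶜ (by simpa using hM α₀) (by simpa using hN α₀) hdisj
    refine ⟨(fun x : ∀ α, Xa α => x α₀) ⁻¹' U, single_mem_prodGT μa h0 α₀ U hU,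
      (fun x : ∀ α, Xa α => x α₀) ⁻¹' V, single_mem_prodGT μa h0 α₀ V hV, ?_, ?_, ?_⟩
    · intro x hx
      exact hCU ((hF₁ x).mp hx α₀)
    · intro x hx
      exact hDV ((hF₂ x).mp hx α₀)
    · exact Set.disjoint_left.mpr fun x hx hx' =>
        Set.disjoint_left.mp hUV hx hx'
  refine ⟨hnorm, fun h => ⟨hnorm (fun α => (h α).1), ?_⟩⟩
  intro x y hxy
  have : ∃ α₀, x α₀ ≠ y α₀ := by
    by_contra hc
    push_neg at hc
    exact hxy (funext hc)
  obtain ⟨α₀, hne⟩ := this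
  obtain ⟨M, hM, hxM, hyM⟩ := (h α₀).2 (x α₀) (y α₀) hne
  exact ⟨(fun z : ∀ α, Xa α => z α₀) ⁻¹' M, single_mem_prodGT μa h0 α₀ M hM, hxM, hyM⟩
end

section
/- A GTS (X, μ) is T3.5 if and only if there exist a compact T4 GTS (Z, ρ) and an embedding f of (X, μ) into (Z, ρ) such that f(X) is dense in (Z, ρ). -/
universe u

/-- The GTS `(X, μ)` is compact: every `μ`-open cover has a finite subcover. -/
def GCompact {X : Type*} (μ : Set (Set X)) : Prop :=
  ∀ S : Set (Set X), S ⊆ μ → ⋃₀ S = Set.univ →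
    ∃ T ⊆ S, T.Finite ∧ ⋃₀ T = Set.univ

namespace Stmt18

variable {Z : Type*}

lemma subset_gClosure (ρ : Set (Set Z)) (A : Set Z) : A ⊆ gClosure ρ A :=
  Set.subset_sInter fun _ hF => hF.2

lemma gClosure_min {ρ : Set (Set Z)} {A F : Set Z} (hF : Fᶜ ∈ ρ) (hAF : A ⊆ F) :
    gClosure ρ A ⊆ F := Set.sInter_subset_of_mem ⟨hF, hAF⟩

lemma gClosure_closed {ρ : Set (Set Z)} (hρ : IsGT ρ) (A : Set Z) :
    (gClosure ρ A)ᶜ ∈ ρ := by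
  rw [gClosure, Set.compl_sInter]
  exact hρ.2 _ (by rintro _ ⟨F, hF, rfl⟩; exact hF.1)

lemma gt1_singleton_closed {ρ : Set (Set Z)} (hρ : IsGT ρ) (h1 : GT1 ρ) (z : Z) :
    ({z}ᶜ : Set Z) ∈ ρ := by
  have h : ({z}ᶜ : Set Z) = ⋃₀ {M | M ∈ ρ ∧ z ∉ M} := by
    ext w
    constructor
    · intro hw
      obtain ⟨M, hM, hwM, hzM⟩ := h1 w z (by simpa using hw)
      exact ⟨M, ⟨hM, hzM⟩, hwM⟩
    · rintro ⟨M, ⟨hM, hzM⟩, hwM⟩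
      simp only [Set.mem_compl_iff, Set.mem_singleton_iff]
      rintro rfl; exact hzM hwM
  rw [h]; exact hρ.2 _ fun M hM => hM.1

lemma shrink_exists {ρ : Set (Set Z)} (hn : GNormal ρ) {C U : Set Z}
    (hC : Cᶜ ∈ ρ) (hU : U ∈ ρ) (hCU : C ⊆ U) :
    ∃ V, V ∈ ρ ∧ C ⊆ V ∧ gClosure ρ V ⊆ U := by
  obtain ⟨M₁, hM₁, M₂, hM₂, hCM₁, hUM₂, hdis⟩ := hn C Uᶜ hC (by simpa) (by
    rw [Set.disjoint_compl_right_iff_subset]; exact hCU)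
  refine ⟨M₁, hM₁, hCM₁, ?_⟩
  have h1 : gClosure ρ M₁ ⊆ M₂ᶜ :=
    gClosure_min (by simpa) (Set.disjoint_left.mp hdis)
  have h2 : M₂ᶜ ⊆ U := by
    intro x hx
    by_contra hxU
    exact hx (hUM₂ hxU)
  exact h1.trans h2

open Classical in
noncomputable def shr (ρ : Set (Set Z)) (C U : Set Z) : Set Z :=
  if h : ∃ V, V ∈ ρ ∧ C ⊆ V ∧ gClosure ρ V ⊆ U then h.choose else ∅

lemma shr_spec {ρ : Set (Set Z)} {C U : Set Z}
    (h : ∃ V, V ∈ ρ ∧ C ⊆ V ∧ gClosure ρ V ⊆ U) :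
    shr ρ C U ∈ ρ ∧ C ⊆ shr ρ C U ∧ gClosure ρ (shr ρ C U) ⊆ U := by
  rw [shr, dif_pos h]; exact h.choose_spec

noncomputable def dy (ρ : Set (Set Z)) (A B : Set Z) : ℕ → ℕ → Set Z
  | 0, _ => shr ρ A Bᶜ
  | (n+1), k =>
      if k % 2 = 0 then dy ρ A B n (k / 2)
      else shr ρ (if k / 2 = 0 then A else gClosure ρ (dy ρ A B n (k / 2)))
               (if k / 2 + 1 = 2^(n+1) then Bᶜ else dy ρ A B n (k / 2 + 1))

variable {ρ : Set (Set Z)} {A B : Set Z}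

lemma dy_inv (hρ : IsGT ρ) (hn : GNormal ρ) (hA : Aᶜ ∈ ρ) (hB : Bᶜ ∈ ρ)
    (hAB : Disjoint A B) : ∀ n : ℕ,
    (∀ k, 1 ≤ k → k ≤ 2^(n+1) - 1 →
      dy ρ A B n k ∈ ρ ∧ A ⊆ dy ρ A B n k ∧ gClosure ρ (dy ρ A B n k) ⊆ Bᶜ)
    ∧ (∀ k, 1 ≤ k → k + 1 ≤ 2^(n+1) - 1 →
      gClosure ρ (dy ρ A B n k) ⊆ dy ρ A B n (k + 1)) := by
  have hABc : A ⊆ Bᶜ := hAB.subset_compl_right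
  intro n
  induction n with
  | zero =>
    have hex := shrink_exists hn hA hB hABc
    have hs := shr_spec hex
    refine ⟨fun k hk1 hk2 => ?_, fun k hk1 hk2 => by omega⟩
    have : (1:ℕ) ≤ 1 := le_refl 1
    interval_cases k
    exact ⟨hs.1, hs.2.1, hs.2.2⟩
  | succ n ih =>
    have h2 : (2:ℕ) ≤ 2^(n+1) := Nat.one_lt_two_pow (by omega)
    have h22 : (2:ℕ)^(n+2) = 2 * 2^(n+1) := by ring
    -- existence spec for odd indices
    have hodd : ∀ k, k % 2 = 1 → k ≤ 2^(n+2) - 1 →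
        ∃ V, V ∈ ρ ∧ (if k / 2 = 0 then A else gClosure ρ (dy ρ A B n (k / 2))) ⊆ V ∧
          gClosure ρ V ⊆ (if k / 2 + 1 = 2^(n+1) then Bᶜ else dy ρ A B n (k / 2 + 1)) := by
      intro k hk2 hkle
      set j := k / 2 with hj
      have hjle : j ≤ 2^(n+1) - 1 := by omega
      have hlc : (if j = 0 then A else gClosure ρ (dy ρ A B n j))ᶜ ∈ ρ := by
        split
        · exact hA
        · exact gClosure_closed hρ _
      have huo : (if j + 1 = 2^(n+1) then Bᶜ else dy ρ A B n (j + 1)) ∈ ρ := by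
        split
        · exact hB
        · exact ((ih.1 (j+1) (by omega) (by omega)).1)
      refine shrink_exists hn hlc huo ?_
      by_cases hj0 : j = 0
      · have hne : ¬ (j + 1 = 2^(n+1)) := by omega
        rw [if_pos hj0, if_neg hne]
        exact (ih.1 (j+1) (by omega) (by omega)).2.1
      · rw [if_neg hj0]
        by_cases hjt : j + 1 = 2^(n+1)
        · rw [if_pos hjt]
          exact (ih.1 j (by omega) (by omega)).2.2
        · rw [if_neg hjt]
          exact ih.2 j (by omega) (by omega)
    constructor
    · intro k hk1 hkle
      by_cases hke : k % 2 = 0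
      · have hdef : dy ρ A B (n+1) k = dy ρ A B n (k / 2) := by
          rw [dy, if_pos hke]
        rw [hdef]
        exact ih.1 (k/2) (by omega) (by omega)
      · have hk2 : k % 2 = 1 := by omega
        have hex := hodd k hk2 hkle
        have hs := shr_spec hex
        have hdef : dy ρ A B (n+1) k =
            shr ρ (if k / 2 = 0 then A else gClosure ρ (dy ρ A B n (k / 2)))
              (if k / 2 + 1 = 2^(n+1) then Bᶜ else dy ρ A B n (k / 2 + 1)) := by
          rw [dy, if_neg hke]
        rw [hdef]
        refine ⟨hs.1, ?_, ?_⟩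
        · refine subset_trans ?_ hs.2.1
          by_cases hj0 : k / 2 = 0
          · rw [if_pos hj0]
          · rw [if_neg hj0]
            exact (subset_trans (ih.1 (k/2) (by omega) (by omega)).2.1
              (subset_gClosure ρ _))
        · refine subset_trans hs.2.2 ?_
          by_cases hjt : k / 2 + 1 = 2^(n+1)
          · rw [if_pos hjt]
          · rw [if_neg hjt]
            exact subset_trans (subset_gClosure ρ _)
              (ih.1 (k/2+1) (by omega) (by omega)).2.2
    · intro k hk1 hkle
      by_cases hke : k % 2 = 0
      · -- k even, k+1 odd
        have hk12 : (k+1) % 2 = 1 := by omega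
        have hex := hodd (k+1) hk12 (by omega)
        have hs := shr_spec hex
        have hdefk : dy ρ A B (n+1) k = dy ρ A B n (k / 2) := by
          rw [dy, if_pos hke]
        have hdefk1 : dy ρ A B (n+1) (k+1) =
            shr ρ (if (k+1) / 2 = 0 then A else gClosure ρ (dy ρ A B n ((k+1) / 2)))
              (if (k+1) / 2 + 1 = 2^(n+1) then Bᶜ else dy ρ A B n ((k+1) / 2 + 1)) := by
          rw [dy, if_neg (by omega)]
        have hjj : (k+1) / 2 = k / 2 := by omega
        have hj0 : ¬ ((k+1) / 2 = 0) := by omega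
        rw [hdefk, hdefk1]
        refine subset_trans ?_ hs.2.1
        rw [if_neg hj0, hjj]
      · -- k odd, k+1 even
        have hk2 : k % 2 = 1 := by omega
        have hex := hodd k hk2 (by omega)
        have hs := shr_spec hex
        have hdefk : dy ρ A B (n+1) k =
            shr ρ (if k / 2 = 0 then A else gClosure ρ (dy ρ A B n (k / 2)))
              (if k / 2 + 1 = 2^(n+1) then Bᶜ else dy ρ A B n (k / 2 + 1)) := by
          rw [dy, if_neg (by omega)]
        have hdefk1 : dy ρ A B (n+1) (k+1) = dy ρ A B n ((k+1) / 2) := by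
          rw [dy, if_pos (by omega)]
        have hjj : (k+1) / 2 = k / 2 + 1 := by omega
        have hjt : ¬ (k / 2 + 1 = 2^(n+1)) := by omega
        rw [hdefk, hdefk1, hjj]
        refine subset_trans hs.2.2 ?_
        rw [if_neg hjt]

lemma dy_even (ρ : Set (Set Z)) (A B : Set Z) (n k : ℕ) (h : k % 2 = 0) :
    dy ρ A B (n+1) k = dy ρ A B n (k / 2) := by
  rw [dy, if_pos h]

variable {ρ : Set (Set Z)} {A B : Set Z}

lemma dy_lift (ρ : Set (Set Z)) (A B : Set Z) (n k : ℕ) :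
    ∀ p, dy ρ A B (n + p) (k * 2^p) = dy ρ A B n k := by
  intro p
  induction p with
  | zero => simp
  | succ p ih =>
    have h1 : n + (p+1) = (n+p) + 1 := by omega
    have h2 : k * 2^(p+1) = (k * 2^p) * 2 := by ring
    rw [h1, h2]
    rw [dy_even ρ A B (n+p) _ (by omega)]
    rw [Nat.mul_div_cancel _ (by norm_num)]
    exact ih

lemma dy_chain (hρ : IsGT ρ) (hn : GNormal ρ) (hA : Aᶜ ∈ ρ) (hB : Bᶜ ∈ ρ)
    (hAB : Disjoint A B) (n : ℕ) :
    ∀ i i', 1 ≤ i → i < i' → i' ≤ 2^(n+1) - 1 →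
      gClosure ρ (dy ρ A B n i) ⊆ dy ρ A B n i' := by
  intro i i'
  induction i' with
  | zero => omega
  | succ i' ih =>
    intro h1 h2 h3
    by_cases hii : i = i'
    · subst hii
      exact (dy_inv hρ hn hA hB hAB n).2 i h1 h3
    · have hstep := (dy_inv hρ hn hA hB hAB n).2 i' (by omega) h3
      exact subset_trans (ih h1 (by omega) (by omega))
        (subset_trans (subset_gClosure ρ _) hstep)

/-- dyadic value of index (n,k) -/
noncomputable def dyr (n k : ℕ) : ℝ := (k : ℝ) / 2^(n+1)

lemma dy_mono (hρ : IsGT ρ) (hn : GNormal ρ) (hA : Aᶜ ∈ ρ) (hB : Bᶜ ∈ ρ)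
    (hAB : Disjoint A B) {n k m j : ℕ}
    (hk1 : 1 ≤ k) (hk2 : k ≤ 2^(n+1) - 1) (hj1 : 1 ≤ j) (hj2 : j ≤ 2^(m+1) - 1)
    (hlt : dyr n k < dyr m j) :
    gClosure ρ (dy ρ A B n k) ⊆ dy ρ A B m j := by
  have hK : (k * 2^m : ℕ) < j * 2^n := by
    have h1 : (k : ℝ) * 2^(m+1) < (j : ℝ) * 2^(n+1) := by
      rw [dyr, dyr, div_lt_div_iff₀ (by positivity) (by positivity)] at hlt
      exact hlt
    have h2 : (k : ℝ) * 2^m < (j : ℝ) * 2^n := by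
      have e1 : (2:ℝ)^(m+1) = 2^m * 2 := by ring
      have e2 : (2:ℝ)^(n+1) = 2^n * 2 := by ring
      rw [e1, e2] at h1
      nlinarith [pow_pos (by norm_num : (0:ℝ) < 2) m, pow_pos (by norm_num : (0:ℝ) < 2) n]
    have := h2
    push_cast at this ⊢
    exact_mod_cast this
  have e1 : dy ρ A B (n + m) (k * 2^m) = dy ρ A B n k := dy_lift ρ A B n k m
  have e2 : dy ρ A B (n + m) (j * 2^n) = dy ρ A B m j := by
    rw [show n + m = m + n by omega]
    exact dy_lift ρ A B m j n
  rw [← e1, ← e2]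
  refine dy_chain hρ hn hA hB hAB (n+m) _ _ (Nat.mul_pos (by omega) (Nat.two_pow_pos m)) hK ?_
  calc j * 2^n ≤ (2^(m+1) - 1) * 2^n := by
        exact Nat.mul_le_mul_right _ hj2
    _ ≤ 2^(n+m+1) - 1 := by
        have : (2:ℕ)^(m+1) * 2^n = 2^(n+m+1) := by rw [← pow_add]; ring_nf
        have h2n : 1 ≤ (2:ℕ)^n := Nat.one_le_two_pow
        have h1 : 1 ≤ (2:ℕ)^(m+1) := Nat.one_le_two_pow
        calc (2^(m+1) - 1) * 2^n = 2^(m+1) * 2^n - 2^n := by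
              rw [Nat.sub_mul, one_mul]
          _ = 2^(n+m+1) - 2^n := by rw [this]
          _ ≤ 2^(n+m+1) - 1 := Nat.sub_le_sub_left h2n _

lemma exists_dyadic {x y : ℝ} (hx : 0 ≤ x) (hxy : x < y) (hy : y ≤ 1) :
    ∃ n k, 1 ≤ k ∧ k ≤ 2^(n+1) - 1 ∧ x < dyr n k ∧ dyr n k < y := by
  obtain ⟨n, hn⟩ := exists_pow_lt_of_lt_one (by linarith : (0:ℝ) < y - x)
    (by norm_num : (1:ℝ)/2 < 1)
  have hp : (0:ℝ) < 2^(n+1) := by positivity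
  set k : ℕ := ⌊x * 2^(n+1)⌋₊ + 1 with hk
  have hfl : (⌊x * 2^(n+1)⌋₊ : ℝ) ≤ x * 2^(n+1) := Nat.floor_le (by positivity)
  have hfl2 : x * 2^(n+1) < (⌊x * 2^(n+1)⌋₊ : ℝ) + 1 := Nat.lt_floor_add_one _
  have hrlt : dyr n k < y := by
    rw [dyr, div_lt_iff₀ hp]
    have hhalf : ((1:ℝ)/2)^(n+1) ≤ (1/2)^n := by
      apply pow_le_pow_of_le_one (by norm_num) (by norm_num) (by omega)
    have h1 : (1:ℝ) < (y - x) * 2^(n+1) := by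
      have : ((1:ℝ)/2)^(n+1) < y - x := lt_of_le_of_lt hhalf hn
      rw [div_pow, one_pow, div_lt_iff₀ hp] at this
      linarith
    push_cast [hk]
    nlinarith
  have hxlt : x < dyr n k := by
    rw [dyr, lt_div_iff₀ hp]
    push_cast [hk]
    linarith
  refine ⟨n, k, by omega, ?_, hxlt, hrlt⟩
  -- k ≤ 2^(n+1) - 1
  have hklt : (k : ℝ) < 2^(n+1) := by
    have := hrlt
    rw [dyr, div_lt_iff₀ hp] at this
    nlinarith
  have hkn : k < 2^(n+1) := by
    have h2 : ((2^(n+1) : ℕ) : ℝ) = 2^(n+1) := by push_cast; ring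
    rw [← h2] at hklt
    exact_mod_cast hklt
  omega

noncomputable def uset (ρ : Set (Set Z)) (A B : Set Z) (z : Z) : Set ℝ :=
  {1} ∪ {x : ℝ | ∃ n k, 1 ≤ k ∧ k ≤ 2^(n+1) - 1 ∧ x = dyr n k ∧ z ∈ dy ρ A B n k}

noncomputable def ury (ρ : Set (Set Z)) (A B : Set Z) (z : Z) : ℝ :=
  sInf (uset ρ A B z)

variable {ρ : Set (Set Z)} {A B : Set Z}

lemma dyr_nonneg (n k : ℕ) : 0 ≤ dyr n k := by
  rw [dyr]; positivity

lemma dyr_lt_one {n k : ℕ} (hk : k ≤ 2^(n+1) - 1) : dyr n k < 1 := by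
  rw [dyr, div_lt_one (by positivity)]
  have h1 : (1:ℕ) ≤ 2^(n+1) := Nat.one_le_two_pow
  have : (k:ℝ) < ((2^(n+1) : ℕ) : ℝ) := by exact_mod_cast (by omega : k < 2^(n+1))
  calc (k:ℝ) < ((2^(n+1) : ℕ) : ℝ) := this
    _ = 2^(n+1) := by push_cast; ring

lemma uset_nonempty (z : Z) : (uset ρ A B z).Nonempty := ⟨1, Or.inl rfl⟩

lemma uset_bdd (z : Z) : BddBelow (uset ρ A B z) := by
  refine ⟨0, fun x hx => ?_⟩
  rcases hx with h | ⟨n, k, _, _, rfl, _⟩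
  · simp only [Set.mem_singleton_iff] at h; rw [h]; norm_num
  · exact dyr_nonneg n k

lemma ury_nonneg (z : Z) : 0 ≤ ury ρ A B z := by
  apply le_csInf (uset_nonempty z)
  rintro x (h1 | ⟨n, k, _, _, rfl, _⟩)
  · simp only [Set.mem_singleton_iff] at h1; rw [h1]; norm_num
  · exact dyr_nonneg n k

lemma ury_le_one (z : Z) : ury ρ A B z ≤ 1 :=
  csInf_le (uset_bdd z) (Or.inl rfl)

lemma ury_le_of_mem {n k : ℕ} (hk1 : 1 ≤ k) (hk2 : k ≤ 2^(n+1) - 1) {z : Z}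
    (hz : z ∈ dy ρ A B n k) : ury ρ A B z ≤ dyr n k :=
  csInf_le (uset_bdd z) (Or.inr ⟨n, k, hk1, hk2, rfl, hz⟩)

lemma ury_lt_elim {z : Z} {a : ℝ} (ha : a ≤ 1) (h : ury ρ A B z < a) :
    ∃ n k, 1 ≤ k ∧ k ≤ 2^(n+1) - 1 ∧ dyr n k < a ∧ z ∈ dy ρ A B n k := by
  obtain ⟨x, hx, hxa⟩ := exists_lt_of_csInf_lt (uset_nonempty z) h
  rcases hx with h1 | ⟨n, k, hk1, hk2, rfl, hz⟩
  · simp only [Set.mem_singleton_iff] at h1; subst h1; linarith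
  · exact ⟨n, k, hk1, hk2, hxa, hz⟩

lemma lt_ury_intro (hρ : IsGT ρ) (hn : GNormal ρ) (hA : Aᶜ ∈ ρ) (hB : Bᶜ ∈ ρ)
    (hAB : Disjoint A B) {z : Z} {b : ℝ} {n k : ℕ}
    (hk1 : 1 ≤ k) (hk2 : k ≤ 2^(n+1) - 1)
    (hb : b < dyr n k) (hz : z ∉ gClosure ρ (dy ρ A B n k)) : b < ury ρ A B z := by
  have : dyr n k ≤ ury ρ A B z := by
    apply le_csInf (uset_nonempty z)
    rintro x (h1 | ⟨m, j, hj1, hj2, rfl, hzm⟩)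
    · simp only [Set.mem_singleton_iff] at h1; rw [h1]
      exact le_of_lt (dyr_lt_one hk2)
    · by_contra hc
      push_neg at hc
      exact hz (subset_gClosure ρ _
        (dy_mono hρ hn hA hB hAB hj1 hj2 hk1 hk2 hc
          (subset_gClosure ρ _ hzm)))
  linarith

lemma lt_ury_elim (hρ : IsGT ρ) (hn : GNormal ρ) (hA : Aᶜ ∈ ρ) (hB : Bᶜ ∈ ρ)
    (hAB : Disjoint A B) {z : Z} {b : ℝ} (hb : 0 ≤ b) (h : b < ury ρ A B z) :
    ∃ n k, 1 ≤ k ∧ k ≤ 2^(n+1) - 1 ∧ b < dyr n k ∧ z ∉ gClosure ρ (dy ρ A B n k) := by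
  obtain ⟨n, k, hk1, hk2, hbk, hky⟩ := exists_dyadic hb h (ury_le_one z)
  obtain ⟨n', k', hk1', hk2', hkk', hky'⟩ :=
    exists_dyadic (dyr_nonneg n k) hky (ury_le_one z)
  refine ⟨n, k, hk1, hk2, hbk, fun hmem => ?_⟩
  have hsub : gClosure ρ (dy ρ A B n k) ⊆ dy ρ A B n' k' :=
    dy_mono hρ hn hA hB hAB hk1 hk2 hk1' hk2' hkk'
  have : ury ρ A B z ≤ dyr n' k' := ury_le_of_mem hk1' hk2' (hsub hmem)
  linarith

lemma ury_eq_one {z : Z} (h : ∀ n k, 1 ≤ k → k ≤ 2^(n+1) - 1 → z ∉ dy ρ A B n k) :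
    ury ρ A B z = 1 := by
  have h2 : {x : ℝ | ∃ n k, 1 ≤ k ∧ k ≤ 2^(n+1) - 1 ∧ x = dyr n k ∧ z ∈ dy ρ A B n k} = ∅ := by
    ext x
    simp only [Set.mem_setOf_eq, Set.mem_empty_iff_false, iff_false]
    rintro ⟨n, k, h1', h2', rfl, hm⟩
    exact h n k h1' h2' hm
  have he : uset ρ A B z = {1} := by
    rw [uset, h2, Set.union_empty]
  rw [ury, he, csInf_singleton]

lemma urysohn (hρ : IsGT ρ) (hn : GNormal ρ) (hA : Aᶜ ∈ ρ) (hB : Bᶜ ∈ ρ)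
    (hAB : Disjoint A B) :
    ∃ h : Z → unitInterval, GCont ρ gamma0 h ∧ (∀ z ∈ A, h z = 0) ∧ ∀ z ∈ B, h z = 1 := by
  have hinv := dy_inv hρ hn hA hB hAB
  refine ⟨fun z => ⟨ury ρ A B z, ury_nonneg z, ury_le_one z⟩, ?_, ?_, ?_⟩
  · -- continuity
    intro N hN
    obtain ⟨S, hS, rfl⟩ := hN
    have hpre : (fun z => (⟨ury ρ A B z, ury_nonneg z, ury_le_one z⟩ : unitInterval)) ⁻¹' ⋃₀ S
        = ⋃₀ {P : Set Z | ∃ V ∈ S,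
            P = (fun z => (⟨ury ρ A B z, ury_nonneg z, ury_le_one z⟩ : unitInterval)) ⁻¹' V} := by
      ext z
      simp only [Set.mem_preimage, Set.mem_sUnion, Set.mem_setOf_eq]
      constructor
      · rintro ⟨V, hV, hzV⟩; exact ⟨_, ⟨V, hV, rfl⟩, hzV⟩
      · rintro ⟨_, ⟨V, hV, rfl⟩, hzV⟩; exact ⟨V, hV, hzV⟩
    rw [hpre]
    apply hρ.2
    rintro _ ⟨V, hV, rfl⟩
    rcases hS V hV with ⟨a, rfl⟩ | ⟨b, rfl⟩
    · -- Iio case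
      have heq : (fun z => (⟨ury ρ A B z, ury_nonneg z, ury_le_one z⟩ : unitInterval)) ⁻¹' Set.Iio a
          = ⋃₀ {D : Set Z | ∃ n k, 1 ≤ k ∧ k ≤ 2^(n+1) - 1 ∧ dyr n k < (a:ℝ) ∧
              D = dy ρ A B n k} := by
        ext z
        simp only [Set.mem_preimage, Set.mem_Iio, Set.mem_sUnion, Set.mem_setOf_eq]
        rw [← Subtype.coe_lt_coe]
        constructor
        · intro hlt
          obtain ⟨n, k, hk1, hk2, hka, hz⟩ := ury_lt_elim a.2.2 hlt
          exact ⟨_, ⟨n, k, hk1, hk2, hka, rfl⟩, hz⟩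
        · rintro ⟨_, ⟨n, k, hk1, hk2, hka, rfl⟩, hz⟩
          exact lt_of_le_of_lt (ury_le_of_mem hk1 hk2 hz) hka
      rw [heq]
      apply hρ.2
      rintro _ ⟨n, k, hk1, hk2, _, rfl⟩
      exact (hinv n).1 k hk1 hk2 |>.1
    · -- Ioi case
      have heq : (fun z => (⟨ury ρ A B z, ury_nonneg z, ury_le_one z⟩ : unitInterval)) ⁻¹' Set.Ioi b
          = ⋃₀ {D : Set Z | ∃ n k, 1 ≤ k ∧ k ≤ 2^(n+1) - 1 ∧ (b:ℝ) < dyr n k ∧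
              D = (gClosure ρ (dy ρ A B n k))ᶜ} := by
        ext z
        simp only [Set.mem_preimage, Set.mem_Ioi, Set.mem_sUnion, Set.mem_setOf_eq]
        rw [← Subtype.coe_lt_coe]
        constructor
        · intro hlt
          obtain ⟨n, k, hk1, hk2, hbk, hz⟩ := lt_ury_elim hρ hn hA hB hAB b.2.1 hlt
          exact ⟨_, ⟨n, k, hk1, hk2, hbk, rfl⟩, hz⟩
        · rintro ⟨_, ⟨n, k, hk1, hk2, hbk, rfl⟩, hz⟩
          exact lt_ury_intro hρ hn hA hB hAB hk1 hk2 hbk hz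
      rw [heq]
      apply hρ.2
      rintro _ ⟨n, k, _, _, _, rfl⟩
      exact gClosure_closed hρ _
  · -- value on A
    intro z hz
    have hle : ury ρ A B z ≤ 0 := by
      by_contra hc
      push_neg at hc
      obtain ⟨n, hn2⟩ := exists_pow_lt_of_lt_one hc (by norm_num : (1:ℝ)/2 < 1)
      have h2 : (2:ℕ) ≤ 2^(n+1) := Nat.one_lt_two_pow (by omega)
      have hmem : z ∈ dy ρ A B n 1 := ((hinv n).1 1 le_rfl (by omega)).2.1 hz
      have hle2 : ury ρ A B z ≤ dyr n 1 := ury_le_of_mem le_rfl (by omega) hmem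
      have hpow : (2:ℝ)^n ≤ 2^(n+1) := by
        apply pow_le_pow_right₀ (by norm_num) (by omega)
      have : dyr n 1 ≤ (1/2:ℝ)^n := by
        rw [dyr, div_pow, one_pow]
        push_cast
        exact div_le_div_of_nonneg_left (by norm_num) (by positivity) hpow
      linarith
    have h0 : ury ρ A B z = 0 := le_antisymm hle (ury_nonneg z)
    exact Subtype.ext (by simp [h0])
  · -- value on B
    intro z hz
    apply Subtype.ext
    show ury ρ A B z = 1
    apply ury_eq_one
    intro n k h1 h2 hm
    exact ((hinv n).1 k h1 h2).2.2 (subset_gClosure ρ _ hm) hz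

lemma preimage_open {X : Type*} {μ : Set (Set X)} {ρ : Set (Set Z)} {f : X → Z}
    (hemb : GEmbedding μ ρ f) {N : Set Z} (hN : N ∈ ρ) : f ⁻¹' N ∈ μ := by
  have h1 : N ∩ Set.range f ∈ {A : Set Z | ∃ N ∈ ρ, A = N ∩ Set.range f} := ⟨N, hN, rfl⟩
  rw [← hemb.2] at h1
  obtain ⟨M, hM, hMe⟩ := h1
  have h2 : f ⁻¹' N = M := by
    ext x
    constructor
    · intro hx
      have h3 : f x ∈ N ∩ Set.range f := ⟨hx, ⟨x, rfl⟩⟩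
      rw [hMe] at h3
      obtain ⟨x', hx', hfx⟩ := h3
      rwa [← hemb.1 hfx]
    · intro hx
      have h3 : f x ∈ f '' M := ⟨x, hx, rfl⟩
      rw [← hMe] at h3
      exact h3.1
  rwa [h2]

lemma backward {X : Type u} (μ : Set (Set X)) (hμ : IsGT μ)
    (h : ∃ (Z : Type u) (ρ : Set (Set Z)), IsGT ρ ∧ GNormal ρ ∧ GT1 ρ ∧
        ∃ f : X → Z, GEmbedding μ ρ f) :
    GCompletelyRegular μ ∧ GT1 μ := by
  obtain ⟨Z, ρ, hρ, hnorm, hT1, f, hemb⟩ := h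
  constructor
  · intro x F hF hxF
    have h1 : f '' Fᶜ ∈ {A : Set Z | ∃ M ∈ μ, A = f '' M} := ⟨Fᶜ, hF, rfl⟩
    rw [hemb.2] at h1
    obtain ⟨N, hN, hNe⟩ := h1
    have hfxN : f x ∈ N := by
      have h2 : f x ∈ f '' Fᶜ := ⟨x, hxF, rfl⟩
      rw [hNe] at h2
      exact h2.1
    have hA : ({f x}ᶜ : Set Z) ∈ ρ := gt1_singleton_closed hρ hT1 (f x)
    have hB : ((Nᶜ)ᶜ : Set Z) ∈ ρ := by simpa
    have hdisj : Disjoint ({f x} : Set Z) Nᶜ := by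
      rw [Set.disjoint_left]
      rintro z rfl hz
      exact hz hfxN
    obtain ⟨h, hc, h0, h1⟩ := urysohn hρ hnorm hA hB hdisj
    refine ⟨fun y => h (f y), ?_, h0 _ rfl, ?_⟩
    · intro V hV
      exact preimage_open hemb (hc V hV)
    · intro y hy
      apply h1
      intro hfy
      have h2 : f y ∈ N ∩ Set.range f := ⟨hfy, y, rfl⟩
      rw [← hNe] at h2
      obtain ⟨y', hy', he⟩ := h2
      rw [← hemb.1 he] at hy
      exact hy' hy
  · intro x y hxy
    obtain ⟨N, hN, h1, h2⟩ := hT1 (f x) (f y) (fun h => hxy (hemb.1 h))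
    exact ⟨f ⁻¹' N, preimage_open hemb hN, h1, h2⟩

/-- the GT generated by a collection of basic sets -/
def gen (C : Set (Set Y)) : Set (Set Y) := {U | ∃ S ⊆ C, U = ⋃₀ S}

lemma gen_isGT (C : Set (Set Y)) : IsGT (gen C) := by
  constructor
  · exact ⟨∅, by simp, by simp⟩
  · intro S hS
    refine ⟨{V | ∃ U, ∃ hU : U ∈ S, V ∈ (hS hU).choose}, ?_, ?_⟩
    · rintro V ⟨U, hU, hV⟩
      exact (hS hU).choose_spec.1 hV
    · ext p
      constructor
      · rintro ⟨U, hU, hp⟩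
        have hspec := (hS hU).choose_spec
        rw [hspec.2] at hp
        obtain ⟨V, hV, hpV⟩ := hp
        exact ⟨V, ⟨U, hU, hV⟩, hpV⟩
      · rintro ⟨V, ⟨U, hU, hV⟩, hpV⟩
        have hspec := (hS hU).choose_spec
        refine ⟨U, hU, ?_⟩
        rw [hspec.2]
        exact ⟨V, hV, hpV⟩

lemma basic_mem_gen {C : Set (Set Y)} {V : Set Y} (hV : V ∈ C) : V ∈ gen C :=
  ⟨{V}, by simpa, by simp⟩

/-- subspace GT -/
def subGT (ν : Set (Set Y)) (Zs : Set Y) : Set (Set Zs) :=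
  {A | ∃ N ∈ ν, A = (Subtype.val : Zs → Y) ⁻¹' N}

lemma subGT_isGT {ν : Set (Set Y)} (hν : IsGT ν) (Zs : Set Y) : IsGT (subGT ν Zs) := by
  constructor
  · exact ⟨∅, hν.1, by simp⟩
  · intro S hS
    refine ⟨⋃₀ {N | N ∈ ν ∧ (Subtype.val : Zs → Y) ⁻¹' N ∈ S}, hν.2 _ (fun N hN => hN.1), ?_⟩
    ext z
    simp only [Set.mem_sUnion, Set.mem_preimage, Set.mem_setOf_eq]
    constructor
    · rintro ⟨A, hA, hzA⟩
      obtain ⟨N, hN, rfl⟩ := hS hA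
      exact ⟨N, ⟨hN, hA⟩, hzA⟩
    · rintro ⟨N, ⟨hN, hNS⟩, hzN⟩
      exact ⟨_, hNS, hzN⟩

lemma subGT_T1 {ν : Set (Set Y)} (h1 : GT1 ν) (Zs : Set Y) : GT1 (subGT ν Zs) := by
  intro z w hzw
  obtain ⟨N, hN, h1', h2'⟩ := h1 z.1 w.1 (fun h => hzw (Subtype.ext h))
  exact ⟨_, ⟨N, hN, rfl⟩, h1', h2'⟩

lemma subGT_closed_val {ν : Set (Set Y)} {Zs : Set Y} {F : Set Zs}
    (hF : Fᶜ ∈ subGT ν Zs) : ∃ N ∈ ν, F = (Subtype.val : Zs → Y) ⁻¹' Nᶜ := by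
  obtain ⟨N, hN, hFe⟩ := hF
  refine ⟨N, hN, ?_⟩
  rw [← compl_compl F, hFe]
  rw [Set.preimage_compl]

lemma subGT_normal {ν : Set (Set Y)} (hν : IsGT ν) (hn : GNormal ν) {Zs : Set Y}
    (hZs : Zsᶜ ∈ ν) : GNormal (subGT ν Zs) := by
  intro F₁ F₂ hF₁ hF₂ hdis
  obtain ⟨N₁, hN₁, rfl⟩ := subGT_closed_val hF₁
  obtain ⟨N₂, hN₂, rfl⟩ := subGT_closed_val hF₂
  have hG₁ : (N₁ᶜ ∩ Zs)ᶜ ∈ ν := by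
    have : (N₁ᶜ ∩ Zs)ᶜ = ⋃₀ {N₁, Zsᶜ} := by
      simp [Set.sUnion_pair, Set.compl_inter]
    rw [this]
    exact hν.2 _ (by rintro N (rfl | rfl) <;> [exact hN₁; exact hZs])
  have hG₂ : (N₂ᶜ ∩ Zs)ᶜ ∈ ν := by
    have : (N₂ᶜ ∩ Zs)ᶜ = ⋃₀ {N₂, Zsᶜ} := by
      simp [Set.sUnion_pair, Set.compl_inter]
    rw [this]
    exact hν.2 _ (by rintro N (rfl | rfl) <;> [exact hN₂; exact hZs])
  have hGdis : Disjoint (N₁ᶜ ∩ Zs) (N₂ᶜ ∩ Zs) := by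
    rw [Set.disjoint_left]
    rintro y ⟨hy1, hyZ⟩ ⟨hy2, _⟩
    have h1 : (⟨y, hyZ⟩ : Zs) ∈ Subtype.val ⁻¹' N₁ᶜ := hy1
    have h2 : (⟨y, hyZ⟩ : Zs) ∈ Subtype.val ⁻¹' N₂ᶜ := hy2
    exact Set.disjoint_left.mp hdis h1 h2
  obtain ⟨M₁, hM₁, M₂, hM₂, hs₁, hs₂, hMdis⟩ := hn _ _ hG₁ hG₂ hGdis
  refine ⟨_, ⟨M₁, hM₁, rfl⟩, _, ⟨M₂, hM₂, rfl⟩, ?_, ?_, ?_⟩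
  · intro z hz; exact hs₁ ⟨hz, z.2⟩
  · intro z hz; exact hs₂ ⟨hz, z.2⟩
  · rw [Set.disjoint_left]
    intro z hz1 hz2
    exact Set.disjoint_left.mp hMdis hz1 hz2

lemma subGT_compact {ν : Set (Set Y)} (hν : IsGT ν) (hc : GCompact ν) {Zs : Set Y}
    (hZs : Zsᶜ ∈ ν) : GCompact (subGT ν Zs) := by
  intro S hS hcov
  classical
  set NS : Set (Set Y) := {N | N ∈ ν ∧ (Subtype.val : Zs → Y) ⁻¹' N ∈ S} ∪ {Zsᶜ} with hNS
  have hNSsub : NS ⊆ ν := by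
    rintro N (⟨hN, _⟩ | rfl)
    · exact hN
    · exact hZs
  have hNScov : ⋃₀ NS = Set.univ := by
    apply Set.eq_univ_of_forall
    intro y
    by_cases hy : y ∈ Zs
    · have : (⟨y, hy⟩ : Zs) ∈ ⋃₀ S := by rw [hcov]; trivial
      obtain ⟨A, hA, hyA⟩ := this
      obtain ⟨N, hN, rfl⟩ := hS hA
      exact ⟨N, Or.inl ⟨hN, hA⟩, hyA⟩
    · exact ⟨Zsᶜ, Or.inr rfl, hy⟩
  obtain ⟨TY, hTYsub, hTYfin, hTYcov⟩ := hc NS hNSsub hNScov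
  refine ⟨{A | A ∈ S ∧ ∃ N ∈ TY, A = (Subtype.val : Zs → Y) ⁻¹' N}, fun A hA => hA.1, ?_, ?_⟩
  · apply Set.Finite.subset (hTYfin.image (fun N => (Subtype.val : Zs → Y) ⁻¹' N))
    rintro A ⟨hAS, N, hN, rfl⟩
    exact ⟨N, hN, rfl⟩
  · apply Set.eq_univ_of_forall
    intro z
    have : z.1 ∈ ⋃₀ TY := by rw [hTYcov]; trivial
    obtain ⟨N, hN, hzN⟩ := this
    rcases hTYsub hN with ⟨hNν, hNS'⟩ | rfl
    · exact ⟨_, ⟨hNS', N, hN, rfl⟩, hzN⟩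
    · exact absurd z.2 hzN


variable {X : Type u}

def CR (μ : Set (Set X)) : Type u := {g : X → unitInterval // GCont μ gamma0 g}

def cyl (μ : Set (Set X)) : Set (Set (CR μ → unitInterval)) :=
  {V | ∃ (g : CR μ) (a : unitInterval),
    V = (fun p => p g) ⁻¹' Set.Iio a ∨ V = (fun p => p g) ⁻¹' Set.Ioi a}

def nu (μ : Set (Set X)) : Set (Set (CR μ → unitInterval)) := gen (cyl μ)

def emb (μ : Set (Set X)) : X → (CR μ → unitInterval) := fun x g => g.1 x

lemma nu_T1 (μ : Set (Set X)) : GT1 (nu μ) := by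
  intro p q hpq
  have hex : ∃ g, p g ≠ q g := by
    by_contra h
    push_neg at h
    exact hpq (funext h)
  obtain ⟨g, hg⟩ := hex
  rcases lt_or_gt_of_ne hg with h | h
  · exact ⟨_, basic_mem_gen ⟨g, q g, Or.inl rfl⟩, h, by simp⟩
  · exact ⟨_, basic_mem_gen ⟨g, q g, Or.inr rfl⟩, h, by simp⟩

lemma nu_compact (μ : Set (Set X)) : GCompact (nu μ) := by
  intro S hS hcov
  classical
  set L : CR μ → Set unitInterval := fun g =>
    {a | ∃ U ∈ S, ∃ Sg ⊆ cyl μ, U = ⋃₀ Sg ∧ ((fun p => p g) ⁻¹' Set.Iio a) ∈ Sg} with hL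
  set H : CR μ → Set unitInterval := fun g =>
    {b | ∃ U ∈ S, ∃ Sg ⊆ cyl μ, U = ⋃₀ Sg ∧ ((fun p => p g) ⁻¹' Set.Ioi b) ∈ Sg} with hH
  have hkey : ∃ g : CR μ, ∀ t : unitInterval,
      (∃ a ∈ L g, t < a) ∨ (∃ b ∈ H g, b < t) := by
    by_contra hcon
    push_neg at hcon
    choose t ht using hcon
    have hmem : t ∈ ⋃₀ S := by rw [hcov]; trivial
    obtain ⟨U, hU, hpU⟩ := hmem
    obtain ⟨Sg, hSg, rfl⟩ := hS hU
    obtain ⟨V, hV, hpV⟩ := hpU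
    rcases hSg hV with ⟨g, a, rfl | rfl⟩
    · have haL : a ∈ L g := ⟨_, hU, Sg, hSg, rfl, hV⟩
      exact absurd hpV (not_lt.mpr ((ht g).1 a haL))
    · have haH : a ∈ H g := ⟨_, hU, Sg, hSg, rfl, hV⟩
      exact absurd hpV (not_lt.mpr ((ht g).2 a haH))
  obtain ⟨g, hg⟩ := hkey
  have hLne : ∃ a ∈ L g, (0:unitInterval) < a := by
    rcases hg 0 with ⟨a, haL, ha⟩ | ⟨b, _, hb⟩
    · exact ⟨a, haL, ha⟩
    · exact absurd hb (not_lt.mpr unitInterval.nonneg')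
  have hHne : ∃ b ∈ H g, b < 1 := by
    rcases hg 1 with ⟨a, _, ha⟩ | ⟨b, hbH, hb⟩
    · exact absurd ha (not_lt.mpr unitInterval.le_one')
    · exact ⟨b, hbH, hb⟩
  obtain ⟨a₀, ha₀L, _⟩ := hLne
  have hmain : ∃ a ∈ L g, ∃ b ∈ H g, b < a := by
    by_contra hcon
    push_neg at hcon
    have hne : (Subtype.val '' L g).Nonempty := ⟨a₀, a₀, ha₀L, rfl⟩
    have hbdd : BddAbove (Subtype.val '' L g) := by
      refine ⟨1, ?_⟩
      rintro _ ⟨a, _, rfl⟩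
      exact a.2.2
    set s : ℝ := sSup (Subtype.val '' L g) with hs
    have hs0 : 0 ≤ s := le_trans a₀.2.1 (le_csSup hbdd ⟨a₀, ha₀L, rfl⟩)
    have hs1 : s ≤ 1 := csSup_le hne (by rintro _ ⟨a, _, rfl⟩; exact a.2.2)
    set tu : unitInterval := ⟨s, hs0, hs1⟩ with htu
    rcases hg tu with ⟨a, haL, hlt⟩ | ⟨b, hbH, hlt⟩
    · have hle : (a:ℝ) ≤ s := le_csSup hbdd ⟨a, haL, rfl⟩
      have : (tu:ℝ) < a := Subtype.coe_lt_coe.mpr hlt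
      simp only [htu] at this
      linarith
    · have hblt : (b:ℝ) < s := Subtype.coe_lt_coe.mpr hlt
      obtain ⟨_, ⟨a, haL, rfl⟩, hba⟩ := exists_lt_of_lt_csSup hne hblt
      have hab : a ≤ b := hcon a haL b hbH
      exact absurd hba (not_lt.mpr (Subtype.coe_le_coe.mpr hab))
  obtain ⟨a, haL, b, hbH, hba⟩ := hmain
  obtain ⟨U₁, hU₁S, S₁, hS₁, hU₁e, hV₁⟩ := haL
  obtain ⟨U₂, hU₂S, S₂, hS₂, hU₂e, hV₂⟩ := hbH
  refine ⟨{U₁, U₂}, ?_, Set.Finite.insert _ (Set.finite_singleton _), ?_⟩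
  · rintro U (rfl | rfl) <;> assumption
  · apply Set.eq_univ_of_forall
    intro p
    by_cases hp : p g < a
    · exact ⟨U₁, Or.inl rfl, by rw [hU₁e]; exact ⟨_, hV₁, hp⟩⟩
    · have hbp : b < p g := lt_of_lt_of_le hba (not_lt.mp hp)
      exact ⟨U₂, Or.inr rfl, by rw [hU₂e]; exact ⟨_, hV₂, hbp⟩⟩

lemma closed_rep (μ : Set (Set X)) {F : Set (CR μ → unitInterval)} (hF : Fᶜ ∈ nu μ) :
    ∃ K : CR μ → Set unitInterval,
      F = {p | ∀ g, p g ∈ K g} ∧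
      (∀ g, ∀ x y z : unitInterval, x ∈ K g → z ∈ K g → x ≤ y → y ≤ z → y ∈ K g) ∧
      (∀ g s, (K g).Nonempty → IsLUB (K g) s → s ∈ K g) ∧
      (∀ g s, (K g).Nonempty → IsGLB (K g) s → s ∈ K g) := by
  obtain ⟨SS, hSS, hFe⟩ := hF
  refine ⟨fun g => {t | ∀ V ∈ SS, ∀ a : unitInterval,
      (V = (fun p => p g) ⁻¹' Set.Iio a → a ≤ t) ∧
      (V = (fun p => p g) ⁻¹' Set.Ioi a → t ≤ a)}, ?_, ?_, ?_, ?_⟩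
  · ext p
    constructor
    · intro hp g
      intro V hV a
      have hVF : V ⊆ Fᶜ := by rw [hFe]; exact fun q hq => ⟨V, hV, hq⟩
      constructor
      · rintro rfl
        have : p ∉ (fun p => p g) ⁻¹' Set.Iio a := fun hmem => hVF hmem hp
        simpa using this
      · rintro rfl
        have : p ∉ (fun p => p g) ⁻¹' Set.Ioi a := fun hmem => hVF hmem hp
        simpa using this
    · intro hp
      by_contra hpF
      have : p ∈ Fᶜ := hpF
      rw [hFe] at this
      obtain ⟨V, hV, hpV⟩ := this
      rcases hSS hV with ⟨g, a, rfl | rfl⟩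
      · exact absurd hpV (by simpa using ((hp g) _ hV a).1 rfl)
      · exact absurd hpV (by simpa using ((hp g) _ hV a).2 rfl)
  · intro g x y z hx hz hxy hyz V hV a
    exact ⟨fun hVe => le_trans ((hx V hV a).1 hVe) hxy,
           fun hVe => le_trans hyz ((hz V hV a).2 hVe)⟩
  · rintro g s ⟨x₀, hx₀⟩ hlub V hV a
    constructor
    · intro hVe
      exact le_trans ((hx₀ V hV a).1 hVe) (hlub.1 hx₀)
    · intro hVe
      exact hlub.2 fun x hx => (hx V hV a).2 hVe
  · rintro g s ⟨x₀, hx₀⟩ hglb V hV a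
    constructor
    · intro hVe
      exact hglb.2 fun x hx => (hx V hV a).1 hVe
    · intro hVe
      exact le_trans (hglb.1 hx₀) ((hx₀ V hV a).2 hVe)

lemma sep_lemma (K K' : Set unitInterval)
    (hKne : K.Nonempty) (hK'ne : K'.Nonempty)
    (hKlub : ∀ s, IsLUB K s → s ∈ K) (hK'glb : ∀ s, IsGLB K' s → s ∈ K')
    (hlt : ∀ x ∈ K, ∀ y ∈ K', x < y) :
    ∃ t : unitInterval, (∀ x ∈ K, x < t) ∧ ∀ y ∈ K', t < y := by
  obtain ⟨x₀, hx₀⟩ := hKne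
  obtain ⟨y₀, hy₀⟩ := hK'ne
  have hne : (Subtype.val '' K).Nonempty := ⟨x₀, x₀, hx₀, rfl⟩
  have hbdd : BddAbove (Subtype.val '' K) := ⟨1, by rintro _ ⟨a, _, rfl⟩; exact a.2.2⟩
  have hne' : (Subtype.val '' K').Nonempty := ⟨y₀, y₀, hy₀, rfl⟩
  have hbdd' : BddBelow (Subtype.val '' K') := ⟨0, by rintro _ ⟨a, _, rfl⟩; exact a.2.1⟩
  set s : ℝ := sSup (Subtype.val '' K) with hsdef
  set i : ℝ := sInf (Subtype.val '' K') with hidef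
  have hs0 : 0 ≤ s := le_trans x₀.2.1 (le_csSup hbdd ⟨x₀, hx₀, rfl⟩)
  have hs1 : s ≤ 1 := csSup_le hne (by rintro _ ⟨a, _, rfl⟩; exact a.2.2)
  have hi0 : 0 ≤ i := le_csInf hne' (by rintro _ ⟨a, _, rfl⟩; exact a.2.1)
  have hi1 : i ≤ 1 := le_trans (csInf_le hbdd' ⟨y₀, hy₀, rfl⟩) y₀.2.2
  have hsK : (⟨s, hs0, hs1⟩ : unitInterval) ∈ K := by
    apply hKlub
    constructor
    · intro x hx
      exact Subtype.coe_le_coe.mp (le_csSup hbdd ⟨x, hx, rfl⟩)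
    · intro u hu
      apply Subtype.coe_le_coe.mp
      apply csSup_le hne
      rintro _ ⟨a, ha, rfl⟩
      exact Subtype.coe_le_coe.mpr (hu ha)
  have hiK' : (⟨i, hi0, hi1⟩ : unitInterval) ∈ K' := by
    apply hK'glb
    constructor
    · intro y hy
      exact Subtype.coe_le_coe.mp (csInf_le hbdd' ⟨y, hy, rfl⟩)
    · intro u hu
      apply Subtype.coe_le_coe.mp
      apply le_csInf hne'
      rintro _ ⟨a, ha, rfl⟩
      exact Subtype.coe_le_coe.mpr (hu ha)
  have hsi : s < i := Subtype.coe_lt_coe.mpr (hlt _ hsK _ hiK')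
  have ht0 : 0 ≤ (s + i) / 2 := by linarith
  have ht1 : (s + i) / 2 ≤ 1 := by linarith
  refine ⟨⟨(s + i) / 2, ht0, ht1⟩, ?_, ?_⟩
  · intro x hx
    have : (x:ℝ) ≤ s := le_csSup hbdd ⟨x, hx, rfl⟩
    exact Subtype.coe_lt_coe.mp (by simp only []; linarith)
  · intro y hy
    have : i ≤ (y:ℝ) := csInf_le hbdd' ⟨y, hy, rfl⟩
    exact Subtype.coe_lt_coe.mp (by simp only []; linarith)

lemma nu_normal (μ : Set (Set X)) : GNormal (nu μ) := by
  intro F₁ F₂ hF₁ hF₂ hdis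
  by_cases h1 : F₁ = ∅
  · subst h1
    refine ⟨∅, (gen_isGT _).1, Set.univ, by simpa using hF₁, by simp, by simp, by simp⟩
  by_cases h2 : F₂ = ∅
  · subst h2
    refine ⟨Set.univ, by simpa using hF₂, ∅, (gen_isGT _).1, by simp, by simp, by simp⟩
  obtain ⟨p₁, hp₁⟩ := Set.nonempty_iff_ne_empty.mpr h1
  obtain ⟨p₂, hp₂⟩ := Set.nonempty_iff_ne_empty.mpr h2
  obtain ⟨K₁, hK₁e, hK₁oc, hK₁lub, hK₁glb⟩ := closed_rep μ hF₁
  obtain ⟨K₂, hK₂e, hK₂oc, hK₂lub, hK₂glb⟩ := closed_rep μ hF₂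
  have hg₀ : ∃ g, K₁ g ∩ K₂ g = ∅ := by
    by_contra hc
    push_neg at hc
    have hch : ∀ g, ∃ t, t ∈ K₁ g ∩ K₂ g := fun g => hc g
    choose t ht using hch
    have htF₁ : t ∈ F₁ := by rw [hK₁e]; exact fun g => (ht g).1
    have htF₂ : t ∈ F₂ := by rw [hK₂e]; exact fun g => (ht g).2
    exact Set.disjoint_left.mp hdis htF₁ htF₂
  obtain ⟨g₀, hg₀e⟩ := hg₀
  have hne₁ : (K₁ g₀).Nonempty := ⟨p₁ g₀, by rw [hK₁e] at hp₁; exact hp₁ g₀⟩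
  have hne₂ : (K₂ g₀).Nonempty := ⟨p₂ g₀, by rw [hK₂e] at hp₂; exact hp₂ g₀⟩
  have hdisK : ∀ x ∈ K₁ g₀, ∀ y ∈ K₂ g₀, x ≠ y := by
    intro x hx y hy hxy
    subst hxy
    have : x ∈ K₁ g₀ ∩ K₂ g₀ := ⟨hx, hy⟩
    rw [hg₀e] at this
    exact this
  have hcomp : (∀ x ∈ K₁ g₀, ∀ y ∈ K₂ g₀, x < y) ∨ (∀ x ∈ K₁ g₀, ∀ y ∈ K₂ g₀, y < x) := by
    by_cases hfirst : ∀ x ∈ K₁ g₀, ∀ y ∈ K₂ g₀, x < y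
    · exact Or.inl hfirst
    · right
      push_neg at hfirst
      obtain ⟨x₀, hx₀, y₀, hy₀, hyx₀⟩ := hfirst
      have hyx₀' : y₀ < x₀ := lt_of_le_of_ne hyx₀ (fun h => hdisK x₀ hx₀ y₀ hy₀ h.symm)
      intro x hx y hy
      by_contra hxy
      push_neg at hxy
      have hxyne : x ≠ y := hdisK x hx y hy
      have hxy' : x < y := lt_of_le_of_ne hxy hxyne
      rcases le_or_gt x y₀ with hcase | hcase
      · have hm : y₀ ∈ K₁ g₀ := hK₁oc g₀ x y₀ x₀ hx hx₀ hcase (le_of_lt hyx₀')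
        have hmm : y₀ ∈ K₁ g₀ ∩ K₂ g₀ := ⟨hm, hy₀⟩
        rw [hg₀e] at hmm
        exact hmm
      · have hm : x ∈ K₂ g₀ := hK₂oc g₀ y₀ x y hy₀ hy (le_of_lt hcase) (le_of_lt hxy')
        have hmm : x ∈ K₁ g₀ ∩ K₂ g₀ := ⟨hx, hm⟩
        rw [hg₀e] at hmm
        exact hmm
  rcases hcomp with hc | hc
  · obtain ⟨t, hti, hts⟩ := sep_lemma (K₁ g₀) (K₂ g₀) hne₁ hne₂
      (fun s hs => hK₁lub g₀ s hne₁ hs) (fun s hs => hK₂glb g₀ s hne₂ hs) hc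
    refine ⟨(fun p => p g₀) ⁻¹' Set.Iio t, basic_mem_gen ⟨g₀, t, Or.inl rfl⟩,
           (fun p => p g₀) ⁻¹' Set.Ioi t, basic_mem_gen ⟨g₀, t, Or.inr rfl⟩, ?_, ?_, ?_⟩
    · intro p hp
      rw [hK₁e] at hp
      exact hti _ (hp g₀)
    · intro p hp
      rw [hK₂e] at hp
      exact hts _ (hp g₀)
    · rw [Set.disjoint_left]
      intro p hp1 hp2
      simp only [Set.mem_preimage, Set.mem_Iio, Set.mem_Ioi] at hp1 hp2
      exact lt_asymm hp1 hp2
  · obtain ⟨t, hti, hts⟩ := sep_lemma (K₂ g₀) (K₁ g₀) hne₂ hne₁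
      (fun s hs => hK₂lub g₀ s hne₂ hs) (fun s hs => hK₁glb g₀ s hne₁ hs)
      (fun x hx y hy => hc y hy x hx)
    refine ⟨(fun p => p g₀) ⁻¹' Set.Ioi t, basic_mem_gen ⟨g₀, t, Or.inr rfl⟩,
           (fun p => p g₀) ⁻¹' Set.Iio t, basic_mem_gen ⟨g₀, t, Or.inl rfl⟩, ?_, ?_, ?_⟩
    · intro p hp
      rw [hK₁e] at hp
      exact hts _ (hp g₀)
    · intro p hp
      rw [hK₂e] at hp
      exact hti _ (hp g₀)
    · rw [Set.disjoint_left]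
      intro p hp1 hp2
      simp only [Set.mem_preimage, Set.mem_Iio, Set.mem_Ioi] at hp1 hp2
      exact lt_asymm hp1 hp2

lemma Iio_mem_gamma0 (a : unitInterval) : Set.Iio a ∈ gamma0 := by
  refine ⟨{Set.Iio a}, ?_, by simp⟩
  rintro V hV
  rw [Set.mem_singleton_iff] at hV
  subst hV
  exact Or.inl ⟨a, rfl⟩

lemma Ioi_mem_gamma0 (b : unitInterval) : Set.Ioi b ∈ gamma0 := by
  refine ⟨{Set.Ioi b}, ?_, by simp⟩
  rintro V hV
  rw [Set.mem_singleton_iff] at hV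
  subst hV
  exact Or.inr ⟨b, rfl⟩

lemma unit_zero_lt_one : (0 : unitInterval) < 1 := by
  rw [← Subtype.coe_lt_coe]
  norm_num

lemma emb_inj {μ : Set (Set X)} (hμ : IsGT μ) (hcr : GCompletelyRegular μ) (h1 : GT1 μ) :
    Function.Injective (emb μ) := by
  intro x y hxy
  by_contra hne
  obtain ⟨g, hgc, hg0, hg1⟩ := hcr x {y} (gt1_singleton_closed hμ h1 y) (by simpa using hne)
  have h := congrFun hxy (⟨g, hgc⟩ : CR μ)
  have h2 : g x = g y := h
  rw [hg0, hg1 y rfl] at h2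
  exact absurd h2 (ne_of_lt unit_zero_lt_one)

lemma emb_range_inter {μ : Set (Set X)} (hμ : IsGT μ) {N : Set (CR μ → unitInterval)}
    (hN : N ∈ nu μ) :
    ∃ M ∈ μ, N ∩ Set.range (emb μ) = emb μ '' M := by
  obtain ⟨SS, hSS, rfl⟩ := hN
  refine ⟨⋃₀ {W : Set X | ∃ V ∈ SS, W = emb μ ⁻¹' V}, ?_, ?_⟩
  · apply hμ.2
    rintro W ⟨V, hV, rfl⟩
    rcases hSS hV with ⟨g, a, rfl | rfl⟩
    · exact g.2 _ (Iio_mem_gamma0 a)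
    · exact g.2 _ (Ioi_mem_gamma0 a)
  · ext z
    constructor
    · rintro ⟨⟨V, hV, hzV⟩, x, rfl⟩
      exact ⟨x, ⟨emb μ ⁻¹' V, ⟨V, hV, rfl⟩, hzV⟩, rfl⟩
    · rintro ⟨x, ⟨W, ⟨V, hV, rfl⟩, hxV⟩, rfl⟩
      exact ⟨⟨V, hV, hxV⟩, x, rfl⟩

lemma emb_image_open {μ : Set (Set X)} (hμ : IsGT μ) (hcr : GCompletelyRegular μ)
    {M : Set X} (hM : M ∈ μ) :
    ∃ N ∈ nu μ, emb μ '' M = N ∩ Set.range (emb μ) := by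
  have hch : ∀ x : X, x ∈ M →
      ∃ g : X → unitInterval, GCont μ gamma0 g ∧ g x = 0 ∧ ∀ y ∈ Mᶜ, g y = 1 := by
    intro x hx
    exact hcr x Mᶜ (by simpa using hM) (by simpa using hx)
  choose gg hgc hg0 hg1 using hch
  refine ⟨⋃₀ {V | ∃ x, ∃ hx : x ∈ M,
      V = (fun p => p (⟨gg x hx, hgc x hx⟩ : CR μ)) ⁻¹' Set.Iio 1}, ⟨_, ?_, rfl⟩, ?_⟩
  · rintro V ⟨x, hx, rfl⟩
    exact ⟨⟨gg x hx, hgc x hx⟩, 1, Or.inl rfl⟩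
  · ext z
    constructor
    · rintro ⟨x, hx, rfl⟩
      refine ⟨⟨_, ⟨x, hx, rfl⟩, ?_⟩, x, rfl⟩
      show emb μ x (⟨gg x hx, hgc x hx⟩ : CR μ) ∈ Set.Iio 1
      show gg x hx x ∈ Set.Iio 1
      rw [hg0 x hx]
      exact unit_zero_lt_one
    · rintro ⟨⟨V, ⟨x, hx, rfl⟩, hzV⟩, x', rfl⟩
      refine ⟨x', ?_, rfl⟩
      by_contra hx'
      have h1 : gg x hx x' = 1 := hg1 x hx x' hx'
      have h2 : emb μ x' (⟨gg x hx, hgc x hx⟩ : CR μ) ∈ Set.Iio 1 := hzV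
      have h3 : gg x hx x' < 1 := h2
      rw [h1] at h3
      exact lt_irrefl _ h3

lemma forward {X : Type u} {μ : Set (Set X)} (hμ : IsGT μ) (hcr : GCompletelyRegular μ)
    (h1 : GT1 μ) :
    ∃ (Z : Type u) (ρ : Set (Set Z)), IsGT ρ ∧ GCompact ρ ∧ GNormal ρ ∧ GT1 ρ ∧
      ∃ f : X → Z, GEmbedding μ ρ f ∧ gClosure ρ (Set.range f) = Set.univ := by
  classical
  set ν := nu μ with hν
  have hνGT : IsGT ν := gen_isGT _
  set e := emb μ with he
  set Zs : Set (CR μ → unitInterval) := gClosure ν (Set.range e) with hZse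
  have hZsc : Zsᶜ ∈ ν := gClosure_closed hνGT _
  have hrsub : Set.range e ⊆ Zs := subset_gClosure ν _
  set f : X → Zs := fun x => ⟨e x, hrsub ⟨x, rfl⟩⟩ with hf
  have hinj : Function.Injective e := emb_inj hμ hcr h1
  refine ⟨Zs, subGT ν Zs, subGT_isGT hνGT Zs, subGT_compact hνGT (nu_compact μ) hZsc,
    subGT_normal hνGT (nu_normal μ) hZsc, subGT_T1 (nu_T1 μ) Zs, f, ⟨?_, ?_⟩, ?_⟩
  · intro x y hxy
    exact hinj (congrArg Subtype.val hxy)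
  · ext A
    simp only [Set.mem_setOf_eq]
    constructor
    · rintro ⟨M, hM, rfl⟩
      obtain ⟨N, hN, hNe⟩ := emb_image_open hμ hcr hM
      refine ⟨Subtype.val ⁻¹' N, ⟨N, hN, rfl⟩, ?_⟩
      ext z
      constructor
      · rintro ⟨x, hx, rfl⟩
        refine ⟨?_, x, rfl⟩
        show e x ∈ N
        have hm : e x ∈ emb μ '' M := ⟨x, hx, rfl⟩
        rw [hNe] at hm
        exact hm.1
      · rintro ⟨hzN, x, rfl⟩
        have hm : e x ∈ N ∩ Set.range e := ⟨hzN, x, rfl⟩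
        rw [← hNe] at hm
        obtain ⟨x', hx', hex⟩ := hm
        exact ⟨x', hx', Subtype.ext hex⟩
    · rintro ⟨A', ⟨N, hN, rfl⟩, rfl⟩
      obtain ⟨M, hM, hMe⟩ := emb_range_inter hμ hN
      refine ⟨M, hM, ?_⟩
      ext z
      constructor
      · rintro ⟨hzN, x, rfl⟩
        have hm : e x ∈ N ∩ Set.range e := ⟨hzN, x, rfl⟩
        rw [hMe] at hm
        obtain ⟨x', hx', hex⟩ := hm
        exact ⟨x', hx', Subtype.ext hex⟩
      · rintro ⟨x, hx, rfl⟩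
        have hm : e x ∈ N ∩ Set.range e := by rw [hMe]; exact ⟨x, hx, rfl⟩
        exact ⟨hm.1, x, rfl⟩
  · apply Set.eq_univ_of_forall
    intro z
    rw [gClosure]
    apply Set.mem_sInter.mpr
    rintro F ⟨hFc, hFr⟩
    obtain ⟨N, hN, hFe⟩ := subGT_closed_val hFc
    rw [hFe]
    have hsub : Set.range e ⊆ Nᶜ := by
      rintro _ ⟨x, rfl⟩
      have hm : f x ∈ F := hFr ⟨x, rfl⟩
      rw [hFe] at hm
      exact hm
    have hZN : Zs ⊆ Nᶜ := gClosure_min (by simpa using hN) hsub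
    exact hZN z.2


end Stmt18

theorem stmt18 {X : Type u} (μ : Set (Set X)) (hμ : IsGT μ) :
    (GCompletelyRegular μ ∧ GT1 μ) ↔
      ∃ (Z : Type u) (ρ : Set (Set Z)), IsGT ρ ∧ GCompact ρ ∧ GNormal ρ ∧ GT1 ρ ∧
        ∃ f : X → Z, GEmbedding μ ρ f ∧ gClosure ρ (Set.range f) = Set.univ := by
  constructor
  · rintro ⟨hcr, h1⟩
    exact Stmt18.forward hμ hcr h1
  · rintro ⟨Z, ρ, hρ, hcomp, hnorm, hT1, f, hemb, hdense⟩
    exact Stmt18.backward μ hμ ⟨Z, ρ, hρ, hnorm, hT1, f, hemb⟩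
end
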